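/- arXiv:2309.04838 — 7 statements merged into one kernel-verified Lean document; each statement's English description precedes it below -/
import Mathlib

section
/- Let n ≥ 1 and let g ∈ G_n be an element with q_n(g) ≠ 0. Then the order of g in G_n equals the order of q_n(g) in A_n. -/
/-- The abelian group `A_n = ℤ/3 ⊕ (ℤ/9)^n`. -/
abbrev An (n : ℕ) : Type := ZMod 3 × (Fin n → ZMod 9)

/-- Projection onto the `ℤ/3` factor. -/
def pi0 {n : ℕ} (a : An n) : ZMod 3 := a.1

/-- The reduction map `ℤ/9 → ℤ/3`. -/
def red : ZMod 9 →+* ZMod 3 := ZMod.castHom (show 3 ∣ 9 by norm_num) (ZMod 3)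

/-- The `i`-th `ℤ/9` coordinate reduced mod 3. -/
def pii {n : ℕ} (i : Fin n) (a : An n) : ZMod 3 := red (a.2 i)

/-- The 2-cocycle `θ(σ,τ) i = π₀(σ)·π_i(τ)`. -/
def theta {n : ℕ} (σ τ : An n) : Fin n → ZMod 3 := fun i => pi0 σ * pii i τ

/-- The underlying set of the group `G_n`. -/
def Gn (n : ℕ) : Type := (Fin n → ZMod 3) × An n

namespace Gn

variable {n : ℕ}

instance instFintype : Fintype (Gn n) :=
  inferInstanceAs (Fintype ((Fin n → ZMod 3) × An n))

instance instDecEq : DecidableEq (Gn n) :=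
  inferInstanceAs (DecidableEq ((Fin n → ZMod 3) × An n))

lemma theta_add_left (a b c : An n) : theta (a + b) c = theta a c + theta b c := by
  funext i; simp only [theta, pi0, Pi.add_apply, Prod.fst_add]; ring

lemma theta_add_right (a b c : An n) : theta a (b + c) = theta a b + theta a c := by
  funext i
  simp only [theta, pii, pi0, Pi.add_apply, Prod.snd_add, map_add]
  ring

lemma theta_zero_left (a : An n) : theta 0 a = 0 := by
  funext i; simp [theta, pi0]

lemma theta_zero_right (a : An n) : theta a 0 = 0 := by
  funext i; simp [theta, pii]

lemma theta_neg_left (a b : An n) : theta (-a) b = - theta a b := by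
  funext i; simp only [theta, pi0, Prod.fst_neg, Pi.neg_apply]; ring

/-- The group structure on `G_n` given by the cocycle `θ`. -/
instance instGroup : Group (Gn n) where
  mul x y := (x.1 + y.1 + theta x.2 y.2, x.2 + y.2)
  one := (0, 0)
  inv x := (-x.1 + theta x.2 x.2, -x.2)
  mul_assoc x y z := by
    apply Prod.ext
    · show x.1 + y.1 + theta x.2 y.2 + z.1 + theta (x.2 + y.2) z.2
        = x.1 + (y.1 + z.1 + theta y.2 z.2) + theta x.2 (y.2 + z.2)
      rw [theta_add_left, theta_add_right]; abel
    · exact add_assoc _ _ _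
  one_mul x := by
    apply Prod.ext
    · show 0 + x.1 + theta 0 x.2 = x.1
      rw [theta_zero_left]; abel
    · exact zero_add _
  mul_one x := by
    apply Prod.ext
    · show x.1 + 0 + theta x.2 0 = x.1
      rw [theta_zero_right]; abel
    · exact add_zero _
  inv_mul_cancel x := by
    apply Prod.ext
    · show -x.1 + theta x.2 x.2 + x.1 + theta (-x.2) x.2 = 0
      rw [theta_neg_left]; abel
    · exact neg_add_cancel _

/-- The quotient map `q_n : G_n → A_n`, `(c, a) ↦ a`. -/
def qn (x : Gn n) : An n := x.2

lemma qn_mul (x y : Gn n) : qn (x * y) = qn x + qn y := rfl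

/-- `q_n` as a group homomorphism to (the multiplicative version of) `A_n`. -/
def qnHom : Gn n →* Multiplicative (An n) where
  toFun x := Multiplicative.ofAdd (qn x)
  map_one' := rfl
  map_mul' _ _ := rfl

end Gn


lemma theta_nsmul_left {n : ℕ} (k : ℕ) (a b : An n) :
    theta (k • a) b = k • theta a b := by
  funext i
  simp only [theta, pi0, Prod.smul_fst, Pi.smul_apply, smul_mul_assoc]

lemma gn_pow {n : ℕ} (g : Gn n) (k : ℕ) :
    g ^ k = (k • g.1 + (k.choose 2) • theta g.2 g.2, k • g.2) := by
  induction k with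
  | zero => simp; rfl
  | succ k ih =>
    rw [pow_succ, ih]
    show (_ + g.1 + theta (k • g.2) g.2, k • g.2 + g.2) = _
    rw [theta_nsmul_left]
    refine Prod.ext ?_ ?_
    · show k • g.1 + k.choose 2 • theta g.2 g.2 + g.1 + k • theta g.2 g.2
        = (k+1) • g.1 + (k+1).choose 2 • theta g.2 g.2
      rw [Nat.choose_two_right, Nat.choose_two_right, succ_nsmul g.1,
        Nat.succ_sub_one]
      have : (k + 1) * k / 2 = k * (k-1) / 2 + k := by
        rcases Nat.eq_zero_or_pos k with hk | hk
        · simp [hk]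
        · have h2 : 2 ∣ k * (k-1) := (Nat.even_mul_pred_self k).two_dvd
          obtain ⟨j, rfl⟩ := Nat.exists_eq_succ_of_ne_zero hk.ne'
          simp only [Nat.succ_eq_add_one, Nat.add_sub_cancel] at h2 ⊢
          have h4 : (j+1+1)*(j+1) = (j+1)*j + 2*(j+1) := by ring
          omega
      rw [this, add_nsmul]
      abel
    · show k • g.2 + g.2 = (k+1) • g.2
      rw [succ_nsmul]

lemma nine_nsmul {n : ℕ} (a : An n) : 9 • a = 0 := by
  refine Prod.ext ?_ ?_
  · show 9 • a.1 = 0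
    rw [nsmul_eq_mul]
    exact mul_eq_zero_of_left (by decide) a.1
  · show 9 • a.2 = 0
    funext i
    show 9 • a.2 i = 0
    rw [nsmul_eq_mul]
    exact mul_eq_zero_of_left (by decide) (a.2 i)

/-- If `g ∈ G_n` satisfies `q_n(g) ≠ 0`, then the order of `g` in `G_n`
equals the (additive) order of `q_n(g)` in `A_n`. -/
theorem stmt_0 (n : ℕ) (hn : 1 ≤ n) (g : Gn n) (hg : Gn.qn g ≠ 0) :
    orderOf g = addOrderOf (Gn.qn g) := by
  set a := Gn.qn g with ha
  set m := addOrderOf a with hm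
  have h9 : m ∣ 9 := addOrderOf_dvd_of_nsmul_eq_zero (nine_nsmul a)
  have hm1 : m ≠ 1 := by
    intro h
    exact hg (AddMonoid.addOrderOf_eq_one_iff.mp h)
  have hcase : m = 3 ∨ m = 9 := by
    have hle : m ≤ 9 := Nat.le_of_dvd (by norm_num) h9
    clear_value a m
    interval_cases m <;> omega
  have h3 : 3 ∣ m := by
    rcases hcase with h | h <;> omega
  obtain ⟨t, ht⟩ := h3
  -- g ^ m = 1
  have hgm : g ^ m = 1 := by
    rw [gn_pow]
    have h1 : m • g.1 = 0 := by
      rw [ht, mul_comm, mul_smul]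
      have : (3 : ℕ) • g.1 = 0 := by
        funext i
        show (3:ℕ) • g.1 i = 0
        rw [nsmul_eq_mul]
        exact mul_eq_zero_of_left (by decide) _
      rw [this, smul_zero]
    have h2 : m.choose 2 • theta g.2 g.2 = 0 := by
      have hd : 3 ∣ m.choose 2 := by
        rcases hcase with h | h <;> rw [h] <;> decide
      obtain ⟨s, hs⟩ := hd
      rw [hs, mul_comm, mul_smul]
      have : (3 : ℕ) • theta g.2 g.2 = 0 := by
        funext i
        show (3:ℕ) • theta g.2 g.2 i = 0
        rw [nsmul_eq_mul]
        exact mul_eq_zero_of_left (by decide) _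
      rw [this, smul_zero]
    have h4 : m • g.2 = 0 := by
      have := addOrderOf_nsmul_eq_zero a
      rw [← hm] at this
      exact this
    rw [h1, h2, h4, add_zero]
    rfl
  have hdvd1 : orderOf g ∣ m := orderOf_dvd_of_pow_eq_one hgm
  have hdvd2 : m ∣ orderOf g := by
    apply addOrderOf_dvd_of_nsmul_eq_zero
    have := pow_orderOf_eq_one g
    have h := congrArg Gn.qn (gn_pow g (orderOf g))
    rw [this] at h
    have : (0 : An n) = orderOf g • g.2 := h
    exact this.symm
  exact Nat.dvd_antisymm hdvd1 hdvd2
end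

section
/- For every a₀ ∈ A_n, the map f_{a₀} : A_n → (Fin n → ZMod 3) defined by f_{a₀}(a) i = π₀(a) * π_i(a₀) − π₀(a₀) * π_i(a) is a group homomorphism, and for every g ∈ G_n with q_n(g) = a₀ and every h ∈ G_n, the commutator h * g * h⁻¹ * g⁻¹ equals (f_{a₀}(q_n(h)), 0) in G_n. In particular the commutator h g h⁻¹ g⁻¹ depends only on q_n(h) and q_n(g). -/
/-- The map `f_{a₀} : A_n → (Fin n → ℤ/3)`,
`f_{a₀}(a) i = π₀(a)·π_i(a₀) − π₀(a₀)·π_i(a)`. -/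
def fComm {n : ℕ} (a₀ : An n) (a : An n) : Fin n → ZMod 3 :=
  fun i => pi0 a * pii i a₀ - pi0 a₀ * pii i a

/-- `f_{a₀}` is a group homomorphism, and for every `g ∈ G_n` with
`q_n(g) = a₀` and every `h ∈ G_n`, the commutator `h g h⁻¹ g⁻¹` equals
`(f_{a₀}(q_n(h)), 0)` in `G_n`.  In particular it depends only on `q_n(h)` and `q_n(g)`. -/
theorem stmt_3 (n : ℕ) (hn : 1 ≤ n) :
    (∀ a₀ a b : An n, fComm a₀ (a + b) = fComm a₀ a + fComm a₀ b) ∧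
    (∀ (a₀ : An n) (g h : Gn n), Gn.qn g = a₀ →
      h * g * h⁻¹ * g⁻¹ = ((fComm a₀ (Gn.qn h), 0) : Gn n)) := by
  constructor
  · intro a₀ a b
    funext i
    simp only [fComm, pi0, pii, Pi.add_apply, Prod.fst_add, Prod.snd_add, map_add]
    ring
  · rintro a₀ g h rfl
    apply Prod.ext
    · show h.1 + g.1 + theta h.2 g.2 + (-h.1 + theta h.2 h.2) +
        theta (h.2 + g.2) (-h.2) + (-g.1 + theta g.2 g.2) +
        theta (h.2 + g.2 + -h.2) (-g.2) = fComm (Gn.qn g) (Gn.qn h)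
      funext i
      simp only [theta, fComm, Gn.qn, pi0, pii, Pi.add_apply, Prod.fst_add, Prod.snd_add,
        Prod.fst_neg, Prod.snd_neg, Pi.neg_apply, map_add, map_neg]
      ring
    · show h.2 + g.2 + -h.2 + -g.2 = 0
      abel
end

section
/- Let g ∈ G_n. The cardinality of the centralizer of g in G_n is: 3 * 9^n if π₀(q_n(g)) ≠ 0; 27^n if π₀(q_n(g)) = 0 and π_i(q_n(g)) ≠ 0 for some i ∈ Fin n; and 3 * 27^n (the order of G_n, i.e. g is central) if π₀(q_n(g)) = 0 and π_i(q_n(g)) = 0 for all i ∈ Fin n. -/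
namespace Gn

variable {n : ℕ}

lemma mul_def (x y : Gn n) :
    x * y = (x.1 + y.1 + theta x.2 y.2, x.2 + y.2) := rfl

lemma mem_centralizer_iff (g x : Gn n) :
    x ∈ Subgroup.centralizer ({g} : Set (Gn n)) ↔
      ∀ i, pi0 g.2 * red (x.2.2 i) = pi0 x.2 * red (g.2.2 i) := by
  rw [Subgroup.mem_centralizer_singleton_iff]
  constructor
  · intro h i
    have h1 := congrArg Prod.fst h
    simp only [mul_def] at h1
    rw [add_comm x.1 g.1] at h1
    have h2 := add_left_cancel h1
    have := congrFun h2 i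
    simpa [theta, pii] using this.symm
  · intro h
    have h2 : theta x.2 g.2 = theta g.2 x.2 := by
      funext i; simpa [theta, pii] using (h i).symm
    apply Prod.ext
    · simp only [mul_def, h2]; abel
    · exact add_comm _ _

lemma card_Gn : Nat.card (Gn n) = 3 ^ n * (3 * 9 ^ n) := by
  rw [Nat.card_eq_fintype_card]
  show Fintype.card ((Fin n → ZMod 3) × An n) = _
  simp [An, ZMod.card]

lemma card_ker_of_surjective {H : Type*} [Group H] (f : Gn n →* H)
    (hf : Function.Surjective f) :
    Nat.card H * Nat.card f.ker = Nat.card (Gn n) := by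
  have h1 := Subgroup.card_eq_card_quotient_mul_card_subgroup (f.ker)
  have h2 : Nat.card (Gn n ⧸ f.ker) = Nat.card H :=
    Nat.card_congr (QuotientGroup.quotientKerEquivOfSurjective f hf).toEquiv
  rw [h1, h2]

/-- Lifting elements of `ZMod 3` along `red`. -/
lemma red_lift : ∀ c : ZMod 3, red ((c.val : ZMod 9)) = c := by decide

/-- Case 1 hom: `x ↦ (s · red(v i) − u · red(t i))_i`. -/
def phi1 (s : ZMod 3) (t : Fin n → ZMod 9) :
    Gn n →* Multiplicative (Fin n → ZMod 3) where
  toFun x := Multiplicative.ofAdd (fun i => s * red (x.2.2 i) - pi0 x.2 * red (t i))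
  map_one' := by
    show Multiplicative.ofAdd _ = Multiplicative.ofAdd (0 : Fin n → ZMod 3)
    congr 1
    funext i
    show s * red ((0 : An n).2 i) - pi0 (0 : An n) * red (t i) = 0
    simp [pi0]
  map_mul' x y := by
    show Multiplicative.ofAdd _ =
      Multiplicative.ofAdd _ * Multiplicative.ofAdd _
    rw [← ofAdd_add]
    congr 1
    funext i
    show s * red ((x.2 + y.2).2 i) - pi0 (x.2 + y.2) * red (t i) = _
    simp only [Prod.snd_add, Prod.fst_add, Pi.add_apply, map_add, pi0, Pi.add_apply]
    ring

lemma centralizer_eq_ker1 (g : Gn n) :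
    Subgroup.centralizer ({g} : Set (Gn n)) = (phi1 g.2.1 g.2.2).ker := by
  ext x
  rw [mem_centralizer_iff, MonoidHom.mem_ker,
    show (phi1 g.2.1 g.2.2) x = Multiplicative.ofAdd
      (fun i => g.2.1 * red (x.2.2 i) - pi0 x.2 * red (g.2.2 i)) from rfl,
    ofAdd_eq_one, funext_iff]
  constructor
  · intro h i; rw [Pi.zero_apply, sub_eq_zero]; exact h i
  · intro h i; have := h i; rw [Pi.zero_apply, sub_eq_zero] at this; exact this

/-- Case 2 hom: projection onto `u`. -/
def phi2 : Gn n →* Multiplicative (ZMod 3) where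
  toFun x := Multiplicative.ofAdd x.2.1
  map_one' := rfl
  map_mul' _ _ := rfl

end Gn

/-- The cardinality of the centralizer of `g ∈ G_n` is `3·9^n` if
`π₀(q_n(g)) ≠ 0`; `27^n` if `π₀(q_n(g)) = 0` and some `π_i(q_n(g)) ≠ 0`; and
`3·27^n` (i.e. `g` is central) if `π₀(q_n(g)) = 0` and all `π_i(q_n(g)) = 0`. -/
theorem stmt_4 (n : ℕ) (hn : 1 ≤ n) (g : Gn n) :
    (pi0 (Gn.qn g) ≠ 0 →
      Nat.card (Subgroup.centralizer ({g} : Set (Gn n))) = 3 * 9 ^ n) ∧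
    (pi0 (Gn.qn g) = 0 → (∃ i : Fin n, pii i (Gn.qn g) ≠ 0) →
      Nat.card (Subgroup.centralizer ({g} : Set (Gn n))) = 27 ^ n) ∧
    (pi0 (Gn.qn g) = 0 → (∀ i : Fin n, pii i (Gn.qn g) = 0) →
      Nat.card (Subgroup.centralizer ({g} : Set (Gn n))) = 3 * 27 ^ n ∧
        g ∈ Subgroup.center (Gn n)) := by
  have hpow : ∀ m : ℕ, 0 < (3 : ℕ) ^ m := fun m => Nat.pow_pos (n := m) (by norm_num)
  refine ⟨?_, ?_, ?_⟩
  · -- Case 1: s ≠ 0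
    intro hs
    have hsurj : Function.Surjective (Gn.phi1 (n := n) g.2.1 g.2.2) := by
      intro w
      refine ⟨(0, (0, fun i => (((g.2.1)⁻¹ * (Multiplicative.toAdd w i)).val : ZMod 9))), ?_⟩
      show Multiplicative.ofAdd _ = w
      rw [show w = Multiplicative.ofAdd (Multiplicative.toAdd w) from rfl,
        Multiplicative.ofAdd.injective.eq_iff]
      funext i
      show g.2.1 * red _ - pi0 ((0 : ZMod 3), _) * red (g.2.2 i) = _
      rw [Gn.red_lift, pi0]
      haveI : Fact (Nat.Prime 3) := ⟨by norm_num⟩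
      have hinv : g.2.1 * (g.2.1)⁻¹ = 1 := mul_inv_cancel₀ hs
      rw [← mul_assoc, hinv]
      simp
    have hcard := Gn.card_ker_of_surjective _ hsurj
    rw [← Gn.centralizer_eq_ker1, Gn.card_Gn] at hcard
    have hc3 : Nat.card (Multiplicative (Fin n → ZMod 3)) = 3 ^ n := by
      simp [Nat.card_eq_fintype_card, ZMod.card]
    rw [hc3] at hcard
    exact Nat.eq_of_mul_eq_mul_left (hpow n) hcard
  · -- Case 2: s = 0, some red(t i) ≠ 0
    intro hs ⟨i0, hi0⟩
    have hs' : g.2.1 = 0 := hs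
    have hcent : Subgroup.centralizer ({g} : Set (Gn n)) = (Gn.phi2 (n := n)).ker := by
      ext x
      rw [Gn.mem_centralizer_iff, MonoidHom.mem_ker]
      show _ ↔ Multiplicative.ofAdd x.2.1 = Multiplicative.ofAdd 0
      rw [Multiplicative.ofAdd.injective.eq_iff]
      constructor
      · intro h
        haveI : Fact (Nat.Prime 3) := ⟨by norm_num⟩
        have := h i0
        rw [pi0, hs', zero_mul] at this
        have h3 : pi0 x.2 = 0 := by
          rcases mul_eq_zero.mp this.symm with h4 | h4
          · exact h4
          · exact absurd h4 hi0
        exact h3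
      · intro h i
        show pi0 g.2 * red (x.2.2 i) = pi0 x.2 * red (g.2.2 i)
        rw [pi0, pi0, hs', h, zero_mul, zero_mul]
    have hsurj : Function.Surjective (Gn.phi2 (n := n)) := fun w =>
      ⟨(0, (Multiplicative.toAdd w, 0)), rfl⟩
    have hcard := Gn.card_ker_of_surjective _ hsurj
    rw [← hcent, Gn.card_Gn] at hcard
    have hc3 : Nat.card (Multiplicative (ZMod 3)) = 3 := by
      simp [Nat.card_eq_fintype_card, ZMod.card]
    rw [hc3] at hcard
    have hrhs : (3 : ℕ) ^ n * (3 * 9 ^ n) = 3 * 27 ^ n := by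
      rw [show (27 : ℕ) = 3 * 9 from rfl, mul_pow]; ring
    rw [hrhs] at hcard
    exact Nat.eq_of_mul_eq_mul_left (by norm_num) hcard
  · -- Case 3: central
    intro hs ht
    have hs' : g.2.1 = 0 := hs
    have hcent : Subgroup.centralizer ({g} : Set (Gn n)) = ⊤ := by
      rw [eq_top_iff]
      intro x _
      rw [Gn.mem_centralizer_iff]
      intro i
      have hti : red (g.2.2 i) = 0 := ht i
      rw [pi0, hs', zero_mul, hti, mul_zero]
    constructor
    · rw [hcent]
      have : Nat.card (⊤ : Subgroup (Gn n)) = Nat.card (Gn n) :=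
        Nat.card_congr Subgroup.topEquiv.toEquiv
      rw [this, Gn.card_Gn, show (27 : ℕ) = 3 * 9 from rfl, mul_pow]; ring
    · rw [Subgroup.mem_center_iff]
      intro x
      have hx : x ∈ Subgroup.centralizer ({g} : Set (Gn n)) := by rw [hcent]; trivial
      exact Subgroup.mem_centralizer_singleton_iff.mp hx
end

section
/- The center of G_n is exactly the set of pairs (c, a) with π₀(a) = 0 and π_i(a) = 0 for all i ∈ Fin n (i.e. every ZMod 9 coordinate of a is divisible by 3), and the center has cardinality 9^n. -/
lemma Gn.mul_def_s5 {n : ℕ} (x y : Gn n) :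
    x * y = (x.1 + y.1 + theta x.2 y.2, x.2 + y.2) := rfl

lemma mem_center_iff' {n : ℕ} (hn : 1 ≤ n) (g : Gn n) :
    g ∈ Subgroup.center (Gn n) ↔
      (pi0 (Gn.qn g) = 0 ∧ ∀ i : Fin n, pii i (Gn.qn g) = 0) := by
  rw [Subgroup.mem_center_iff]
  constructor
  · intro h
    constructor
    · have i0 : Fin n := ⟨0, hn⟩
      have := h ((0 : Fin n → ZMod 3), ((0 : ZMod 3), fun j => if j = i0 then 1 else 0))
      have h1 := congrArg Prod.fst this
      erw [Gn.mul_def_s5, Gn.mul_def_s5] at h1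
      have h2 := congrFun h1 i0
      simp only [Pi.add_apply, theta, pi0, pii, Pi.zero_apply] at h2
      simpa [Gn.qn, pi0] using h2
    · intro i
      have := h ((0 : Fin n → ZMod 3), ((1 : ZMod 3), (0 : Fin n → ZMod 9)))
      have h1 := congrArg Prod.fst this
      erw [Gn.mul_def_s5, Gn.mul_def_s5] at h1
      have h2 := congrFun h1 i
      simp only [Pi.add_apply, theta, pi0, pii, Pi.zero_apply] at h2
      simpa [Gn.qn, pii] using h2
  · rintro ⟨h0, hi⟩ h
    simp only [Gn.mul_def_s5]
    refine Prod.ext ?_ (add_comm _ _)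
    have : theta h.2 g.2 = theta g.2 h.2 := by
      funext i
      simp only [theta]
      rw [show pii i g.2 = 0 from hi i, show pi0 g.2 = 0 from h0]
      ring
    rw [this]; abel

def kerRed : Type := {x : ZMod 9 // red x = 0}

instance : Fintype kerRed := by unfold kerRed red; infer_instance

lemma card_kerRed : Fintype.card kerRed = 3 := by
  unfold kerRed red; decide

def centerEquiv {n : ℕ} (hn : 1 ≤ n) :
    Subgroup.center (Gn n) ≃ (Fin n → ZMod 3) × (Fin n → kerRed) where
  toFun g := (g.1.1, fun i => ⟨g.1.2.2 i, ((mem_center_iff' hn g.1).1 g.2).2 i⟩)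
  invFun p := ⟨(p.1, (0, fun i => (p.2 i).1)), by
    refine (mem_center_iff' hn _).2 ?_
    exact ⟨rfl, fun i => (p.2 i).2⟩⟩
  left_inv g := Subtype.ext (by
    obtain ⟨⟨c, a0, a⟩, hg⟩ := g
    have h0 := ((mem_center_iff' hn _).1 hg).1
    simp only [Gn.qn, pi0] at h0
    simp [h0.symm]; rfl)
  right_inv p := rfl

/-- The center of `G_n` consists exactly of the pairs `(c, a)` with
`π₀(a) = 0` and `π_i(a) = 0` for all `i`, and it has cardinality `9^n`. -/
theorem stmt_5 (n : ℕ) (hn : 1 ≤ n) :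
    (∀ g : Gn n, g ∈ Subgroup.center (Gn n) ↔
      (pi0 (Gn.qn g) = 0 ∧ ∀ i : Fin n, pii i (Gn.qn g) = 0)) ∧
    Nat.card (Subgroup.center (Gn n)) = 9 ^ n := by
  refine ⟨mem_center_iff' hn, ?_⟩
  rw [Nat.card_congr (centerEquiv hn)]
  simp [Nat.card_eq_fintype_card, card_kerRed, ZMod.card]
  rw [← Nat.mul_pow]
end

section
/- Consider the action of the group G_n × (ZMod 9)ˣ on the set of non-identity elements of G_n given by (h, α) · g = h * g^α * h⁻¹, where g^α denotes g^(α.val) (well-defined since every element of G_n has order dividing 9). The number of orbits of this action equals (3^n − 1)/2 + (9^n − 3^n)/3 + 3^n + 3^n*(3^n − 1)/2 + 3^n*(9^n − 3^n)/18. -/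
namespace Stmt10
open Gn
variable {n : ℕ}

/-- The orbit set of `g`. -/
def Om (g : Gn n) : Set (Gn n) :=
  {h : Gn n | ∃ (x : Gn n) (α : (ZMod 9)ˣ), x * g ^ ((α : ZMod 9).val) * x⁻¹ = h}

lemma mul_def (x y : Gn n) : x * y = (x.1 + y.1 + theta x.2 y.2, x.2 + y.2) := rfl
lemma one_def : (1 : Gn n) = (0, 0) := rfl
lemma inv_def (x : Gn n) : x⁻¹ = (-x.1 + theta x.2 x.2, -x.2) := rfl

lemma theta_neg_right (a b : An n) : theta a (-b) = - theta a b := by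
  funext i
  simp only [theta, pii, pi0, Prod.snd_neg, Pi.neg_apply, map_neg]
  ring

lemma theta_nsmul_left (m : ℕ) (a b : An n) : theta (m • a) b = m • theta a b := by
  funext i
  simp only [theta, pi0, Prod.smul_fst, Pi.smul_apply, smul_mul_assoc]

lemma theta_nsmul_right (m : ℕ) (a b : An n) : theta a (m • b) = m • theta a b := by
  funext i
  simp only [theta, pii, pi0, Prod.smul_snd, Pi.smul_apply, map_nsmul, Pi.smul_apply,
    mul_smul_comm]

lemma pow_coords (g : Gn n) (m : ℕ) :
    g ^ m = (m • g.1 + (m.choose 2) • theta g.2 g.2, m • g.2) := by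
  induction m with
  | zero => simp [one_def]; rfl
  | succ m ih =>
    rw [pow_succ, ih]
    apply Prod.ext
    · show m • g.1 + (m.choose 2) • theta g.2 g.2 + g.1 + theta (m • g.2) g.2
        = (m+1) • g.1 + ((m+1).choose 2) • theta g.2 g.2
      rw [theta_nsmul_left, Nat.choose_succ_succ, Nat.choose_one_right, succ_nsmul, add_nsmul]
      abel
    · show m • g.2 + g.2 = (m+1) • g.2
      rw [succ_nsmul]

lemma z3_nsmul_three (x : ZMod 3) : (3 : ℕ) • x = 0 := by
  rw [nsmul_eq_mul]; exact mul_eq_zero_of_left (by decide) x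

lemma g_pow_nine (g : Gn n) : g ^ 9 = 1 := by
  rw [pow_coords, one_def]
  apply Prod.ext
  · show (9:ℕ) • g.1 + (Nat.choose 9 2) • theta g.2 g.2 = 0
    funext i
    show (9:ℕ) • g.1 i + (36:ℕ) • theta g.2 g.2 i = 0
    rw [nsmul_eq_mul, nsmul_eq_mul]
    have h9 : ((9:ℕ) : ZMod 3) = 0 := by decide
    have h36 : ((36:ℕ) : ZMod 3) = 0 := by decide
    rw [h9, h36]; ring
  · show (9:ℕ) • g.2 = 0
    apply Prod.ext
    · show (9:ℕ) • g.2.1 = 0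
      rw [nsmul_eq_mul]
      exact mul_eq_zero_of_left (by decide) _
    · funext i
      show (9:ℕ) • g.2.2 i = 0
      rw [nsmul_eq_mul]
      exact mul_eq_zero_of_left (by decide) _

lemma pow_mod9 (g : Gn n) (m : ℕ) : g ^ m = g ^ (m % 9) := by
  conv_lhs => rw [← Nat.div_add_mod m 9]
  rw [pow_add, pow_mul, g_pow_nine, one_pow, one_mul]

lemma conj_coords (x G : Gn n) :
    x * G * x⁻¹ = (G.1 + theta x.2 G.2 - theta G.2 x.2, G.2) := by
  apply Prod.ext
  · show x.1 + G.1 + theta x.2 G.2 + (-x.1 + theta x.2 x.2) + theta (x.2 + G.2) (-x.2)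
      = G.1 + theta x.2 G.2 - theta G.2 x.2
    rw [theta_add_left, theta_neg_right, theta_neg_right]
    abel
  · show x.2 + G.2 + -x.2 = G.2
    abel

lemma conj_pow_coords (x g : Gn n) (m : ℕ) :
    x * g ^ m * x⁻¹
      = (m • g.1 + (m.choose 2) • theta g.2 g.2 + theta x.2 (m • g.2) - theta (m • g.2) x.2,
          m • g.2) := by
  rw [pow_coords]; exact conj_coords x _

lemma red_lift : ∀ y : ZMod 3, red ((y.val : ZMod 9)) = y := by decide

lemma mem_Om_iff {g h : Gn n} :
    h ∈ Om g ↔ ∃ (α : (ZMod 9)ˣ) (t : ZMod 3) (w : Fin n → ZMod 3),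
      h.2 = (α : ZMod 9).val • g.2 ∧
      h.1 = (α : ZMod 9).val • g.1 + ((α : ZMod 9).val.choose 2) • theta g.2 g.2
            + (fun i => t * red (h.2.2 i)) - (fun i => h.2.1 * w i) := by
  constructor
  · rintro ⟨x, α, rfl⟩
    refine ⟨α, x.2.1, fun i => red (x.2.2 i), ?_, ?_⟩
    · rw [conj_pow_coords]
    · rw [conj_pow_coords]
      rfl
  · rintro ⟨α, t, w, h2, h1⟩
    refine ⟨(0, (t, fun i => ((w i).val : ZMod 9))), α, ?_⟩
    rw [conj_pow_coords (x := (0, (t, fun i => ((w i).val : ZMod 9))))]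
    have hth : theta ((α : ZMod 9).val • g.2) ((t, fun i => ((w i).val : ZMod 9)) : An n)
        = fun i => ((α : ZMod 9).val • g.2).1 * w i := by
      funext i
      show pi0 _ * red ((fun i => ((w i).val : ZMod 9)) i) = _
      rw [red_lift]
      rfl
    apply Prod.ext
    · show (α : ZMod 9).val • g.1 + ((α : ZMod 9).val.choose 2) • theta g.2 g.2
        + theta ((t, fun i => ((w i).val : ZMod 9)) : An n) ((α : ZMod 9).val • g.2)
        - theta ((α : ZMod 9).val • g.2) ((t, fun i => ((w i).val : ZMod 9)) : An n) = h.1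
      rw [hth, h1, h2]
      rfl
    · exact h2.symm


lemma self_mem_Om (g : Gn n) : g ∈ Om g := by
  refine ⟨1, 1, ?_⟩
  have : ((1 : (ZMod 9)ˣ) : ZMod 9).val = 1 := by decide
  rw [this]; simp

lemma pow_val_mul (g : Gn n) (α β : (ZMod 9)ˣ) :
    g ^ ((α : ZMod 9).val * (β : ZMod 9).val) = g ^ (((α * β : (ZMod 9)ˣ) : ZMod 9)).val := by
  rw [pow_mod9 g ((α : ZMod 9).val * (β : ZMod 9).val)]
  congr 1


lemma conj_pow_eq (x g : Gn n) (m k : ℕ) : (x * g ^ m * x⁻¹) ^ k = x * g ^ (m * k) * x⁻¹ := by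
  rw [pow_mul]
  induction k with
  | zero => simp
  | succ k ih => rw [pow_succ, ih, pow_succ]; group

lemma Om_trans {g h k : Gn n} (hh : h ∈ Om g) (hk : k ∈ Om h) : k ∈ Om g := by
  obtain ⟨x, α, rfl⟩ := hh
  obtain ⟨y, β, rfl⟩ := hk
  refine ⟨y * x, α * β, ?_⟩
  rw [conj_pow_eq, pow_val_mul]
  group

lemma Om_symm {g h : Gn n} (hh : h ∈ Om g) : g ∈ Om h := by
  obtain ⟨x, α, rfl⟩ := hh
  refine ⟨x⁻¹, α⁻¹, ?_⟩
  rw [conj_pow_eq, pow_val_mul, mul_inv_cancel]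
  have : ((1 : (ZMod 9)ˣ) : ZMod 9).val = 1 := by decide
  rw [this]
  group

lemma Om_eq_of_mem {g h : Gn n} (hh : h ∈ Om g) : Om h = Om g :=
  Set.ext fun k => ⟨fun hk => Om_trans hh hk, fun hk => Om_trans (Om_symm hh) hk⟩

lemma eq_one_of_mem_Om_one {g : Gn n} (hg : g ∈ Om (1 : Gn n)) : g = 1 := by
  obtain ⟨x, α, rfl⟩ := hg
  simp

lemma ne_one_of_mem {g h : Gn n} (hg : g ≠ 1) (hh : h ∈ Om g) : h ≠ 1 := by
  rintro rfl
  exact hg (eq_one_of_mem_Om_one (Om_symm hh))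


-- decidable facts about small rings
lemma z3_mul_eq_zero_iff : ∀ a b : ZMod 3, a ≠ 0 → (a * b = 0 ↔ b = 0) := by decide
lemma z3_solve : ∀ a y : ZMod 3, a ≠ 0 → ∃ x, a * x = y := by decide
lemma z3_neg_ne : ∀ s : ZMod 3, s ≠ 0 → s ≠ -s := by decide
lemma z3_eq_neg_self : ∀ s : ZMod 3, s = -s → s = 0 := by decide
lemma z9_eq_neg_self : ∀ x : ZMod 9, x = -x → x = 0 := by decide
lemma z9_red_cases : ∀ d : ZMod 9, red d = 0 → d = 0 ∨ d = 3 ∨ d = 6 := by decide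
lemma z9_three_mul : ∀ x : ZMod 9, red x = 0 → 3 * x = 0 := by decide
lemma z9_cancel : ∀ x : ZMod 9, red x ≠ 0 → ∀ e : ZMod 9, e * x = 0 → e = 0 := by decide
lemma z3_red_ne : ∀ x : ZMod 9, red x ≠ 0 → 3 * x ≠ 0 := by decide

lemma unit_cast3_ne (α : (ZMod 9)ˣ) : (((α : ZMod 9).val : ZMod 3)) ≠ 0 := by
  intro h0
  have hco := ZMod.val_coe_unit_coprime α
  have h3 : (3:ℕ) ∣ (α : ZMod 9).val := by
    rwa [ZMod.natCast_eq_zero_iff] at h0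
  have : (3:ℕ) ∣ 1 := hco ▸ Nat.dvd_gcd h3 (by norm_num)
  norm_num at this

lemma h2_comps {g h : Gn n} (hm : h ∈ Om g) :
    ∃ α : (ZMod 9)ˣ,
      h.2.1 = (((α : ZMod 9).val : ZMod 3)) * g.2.1 ∧
      (∀ i, red (h.2.2 i) = (((α : ZMod 9).val : ZMod 3)) * red (g.2.2 i)) := by
  obtain ⟨α, t, w, h2, -⟩ := mem_Om_iff.1 hm
  refine ⟨α, ?_, fun i => ?_⟩
  · rw [h2]
    show (α : ZMod 9).val • g.2.1 = _
    rw [nsmul_eq_mul]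
  · rw [h2]
    show red ((α : ZMod 9).val • g.2.2 i) = _
    rw [nsmul_eq_mul, map_mul, map_natCast]

lemma s_zero_iff {g h : Gn n} (hm : h ∈ Om g) : g.2.1 = 0 ↔ h.2.1 = 0 := by
  obtain ⟨α, hs, -⟩ := h2_comps hm
  rw [hs, z3_mul_eq_zero_iff _ _ (unit_cast3_ne α)]

lemma rv_zero_iff {g h : Gn n} (hm : h ∈ Om g) :
    (∀ i, red (g.2.2 i) = 0) ↔ (∀ i, red (h.2.2 i) = 0) := by
  obtain ⟨α, -, hv⟩ := h2_comps hm
  constructor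
  · intro hg i; rw [hv i, hg i, mul_zero]
  · intro hh i
    have := hh i
    rw [hv i, z3_mul_eq_zero_iff _ _ (unit_cast3_ne α)] at this
    exact this

lemma c3_nsmul (c : Fin n → ZMod 3) : (3:ℕ) • c = 0 := by
  funext i; exact z3_nsmul_three (c i)

lemma an3_nsmul {a : An n} (hrv : ∀ i, red (a.2 i) = 0) : (3:ℕ) • a = 0 := by
  apply Prod.ext
  · exact z3_nsmul_three a.1
  · funext i
    show (3:ℕ) • a.2 i = 0
    rw [nsmul_eq_mul]
    have := z9_three_mul (a.2 i) (hrv i)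
    simpa using this

lemma nsmul_mod3 {M : Type*} [AddCommGroup M] {a : M} (h3 : (3:ℕ) • a = 0) (m : ℕ) :
    m • a = (m % 3) • a := by
  conv_lhs => rw [← Nat.div_add_mod m 3]
  rw [add_nsmul, mul_nsmul, h3, smul_zero, zero_add]

lemma two_nsmul_neg {M : Type*} [AddCommGroup M] {a : M} (h3 : (3:ℕ) • a = 0) :
    (2:ℕ) • a = -a := by
  have h : (2:ℕ) • a + a = 0 := by
    rw [← succ_nsmul]; exact h3
  exact eq_neg_of_add_eq_zero_left h

lemma mod3_cases (m : ℕ) (hm : ((m : ℕ) : ZMod 3) ≠ 0) : m % 3 = 1 ∨ m % 3 = 2 := by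
  have hv : ((m : ZMod 3)).val = m % 3 := ZMod.val_natCast 3 m
  have : ((m : ZMod 3)).val ≠ 0 := fun h => hm (ZMod.val_eq_zero _ |>.1 h)
  have hlt : m % 3 < 3 := Nat.mod_lt _ (by norm_num)
  omega

lemma theta_self_zero {a : An n} (ha : a.1 = 0) : theta a a = 0 := by
  funext i; simp [theta, pi0, ha]

lemma neg_one_val : (((-1 : (ZMod 9)ˣ) : ZMod 9)).val = 8 := by decide

lemma Om_P1 {g : Gn n} (hs : g.2.1 = 0) (hrv : ∀ i, red (g.2.2 i) = 0) :
    Om g = {g, g⁻¹} := by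
  have h3 : (3:ℕ) • g.2 = 0 := an3_nsmul hrv
  have hθ : theta g.2 g.2 = 0 := theta_self_zero hs
  have hginv : g⁻¹ = (-g.1, -g.2) := by
    rw [inv_def, hθ, add_zero]
  ext h
  constructor
  · intro hm
    have hh21 : h.2.1 = 0 := (s_zero_iff hm).1 hs
    have hhrv : ∀ i, red (h.2.2 i) = 0 := (rv_zero_iff hm).1 hrv
    obtain ⟨α, t, w, h2, h1⟩ := mem_Om_iff.1 hm
    set m := (α : ZMod 9).val with hmdef
    have h1' : h.1 = m • g.1 := by
      rw [h1, hθ, smul_zero, add_zero]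
      funext i
      simp [hhrv i, hh21]
    have hmod := mod3_cases m (unit_cast3_ne α)
    rcases hmod with he | he
    · left
      have : h = (g.1, g.2) := by
        apply Prod.ext
        · rw [h1', nsmul_mod3 (c3_nsmul g.1), he, one_nsmul]
        · rw [h2]
          show m • g.2 = g.2
          rw [nsmul_mod3 h3, he, one_nsmul]
      exact this
    · right
      rw [hginv]
      apply Prod.ext
      · rw [h1', nsmul_mod3 (c3_nsmul g.1), he]
        exact two_nsmul_neg (c3_nsmul g.1)
      · rw [h2]
        show m • g.2 = -g.2
        rw [nsmul_mod3 h3, he]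
        exact two_nsmul_neg h3
  · rintro (rfl | rfl)
    · exact self_mem_Om _
    · apply mem_Om_iff.2 ⟨-1, 0, 0, ?_, ?_⟩
      · rw [neg_one_val, hginv]
        show -g.2 = (8:ℕ) • g.2
        rw [nsmul_mod3 h3]
        exact (two_nsmul_neg h3).symm
      · rw [neg_one_val, hθ, smul_zero, add_zero, hginv]
        show -g.1 = (8:ℕ) • g.1 + (fun i => 0 * red ((-g.2).2 i)) - (fun i => (-g.2).1 * (0 : Fin n → ZMod 3) i)
        rw [nsmul_mod3 (c3_nsmul g.1)]
        funext i
        simp [two_nsmul_neg (c3_nsmul g.1)]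

lemma z3_mul_ne : ∀ a b : ZMod 3, a ≠ 0 → b ≠ 0 → a * b ≠ 0 := by decide

lemma one_val9 : ((1 : (ZMod 9)ˣ) : ZMod 9).val = 1 := by decide

lemma solve_fun {s' : ZMod 3} (hs' : s' ≠ 0) (d : Fin n → ZMod 3) :
    ∃ w : Fin n → ZMod 3, (fun i => s' * w i) = d := by
  refine ⟨fun i => Classical.choose (z3_solve s' (d i) hs'), funext fun i => ?_⟩
  exact Classical.choose_spec (z3_solve s' (d i) hs')

lemma zero_lam (f : Fin n → ZMod 3) : (fun i => (0 : ZMod 3) * f i) = 0 := by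
  funext i; exact zero_mul _

lemma red_nsmul (m : ℕ) (x : ZMod 9) : red (m • x) = ((m : ℕ) : ZMod 3) * red x := by
  rw [nsmul_eq_mul, map_mul, map_natCast]

lemma smul_s (m : ℕ) (a : An n) : (m • a).1 = ((m : ℕ) : ZMod 3) * a.1 := by
  show m • a.1 = _
  rw [nsmul_eq_mul]

lemma Om_P3 {g : Gn n} (hs : g.2.1 ≠ 0) :
    Om g = {h : Gn n | ∃ α : (ZMod 9)ˣ, (α : ZMod 9).val • g.2 = h.2} := by
  ext h
  constructor
  · intro hm
    obtain ⟨α, t, w, h2, -⟩ := mem_Om_iff.1 hm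
    exact ⟨α, h2.symm⟩
  · rintro ⟨α, h2⟩
    have hs' : h.2.1 ≠ 0 := by
      rw [← h2, smul_s]
      exact z3_mul_ne _ _ (unit_cast3_ne α) hs
    obtain ⟨w, hw⟩ := solve_fun hs'
      ((α : ZMod 9).val • g.1 + ((α : ZMod 9).val.choose 2) • theta g.2 g.2 + 0 - h.1)
    refine mem_Om_iff.2 ⟨α, 0, w, h2.symm, ?_⟩
    rw [zero_lam, hw]
    abel

lemma Om_P2 {g : Gn n} (hs : g.2.1 ≠ 0) (hrv : ∀ i, red (g.2.2 i) = 0) :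
    Om g = {h : Gn n | h.2 = g.2 ∨ h.2 = -g.2} := by
  have h3 : (3:ℕ) • g.2 = 0 := an3_nsmul hrv
  rw [Om_P3 hs]
  ext h
  constructor
  · rintro ⟨α, h2⟩
    rcases mod3_cases _ (unit_cast3_ne α) with he | he
    · left; rw [← h2, nsmul_mod3 h3, he, one_nsmul]
    · right; rw [← h2, nsmul_mod3 h3, he]; exact two_nsmul_neg h3
  · rintro (he | he)
    · exact ⟨1, by rw [one_val9, one_nsmul, he]⟩
    · refine ⟨-1, ?_⟩
      rw [neg_one_val, nsmul_mod3 h3]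
      show (2:ℕ) • g.2 = h.2
      rw [two_nsmul_neg h3, he]

lemma Om_P4 {g : Gn n} (hs : g.2.1 = 0) :
    Om g = Set.range (fun p : (ZMod 9)ˣ × ZMod 3 =>
      ((((p.1 : ZMod 9).val) • g.1 + fun i => p.2 * red (g.2.2 i)),
        ((p.1 : ZMod 9).val) • g.2) : (ZMod 9)ˣ × ZMod 3 → Gn n) := by
  have hθ : theta g.2 g.2 = 0 := theta_self_zero hs
  ext h
  constructor
  · intro hm
    obtain ⟨α, t, w, h2, h1⟩ := mem_Om_iff.1 hm
    have hh21 : h.2.1 = 0 := by rw [h2, smul_s, hs, mul_zero]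
    refine ⟨(α, t * (((α : ZMod 9).val : ZMod 3))), ?_⟩
    apply Prod.ext
    · show (α : ZMod 9).val • g.1 + (fun i => (t * _) * red (g.2.2 i)) = h.1
      rw [h1, hθ, smul_zero, add_zero, hh21]
      have hv : ∀ i, red (h.2.2 i) = (((α : ZMod 9).val : ZMod 3)) * red (g.2.2 i) := by
        intro i
        rw [h2]
        show red ((α : ZMod 9).val • g.2.2 i) = _
        exact red_nsmul _ _
      funext i
      simp only [Pi.add_apply, Pi.sub_apply, hv i]
      ring
    · exact h2.symm
  · rintro ⟨⟨α, t⟩, rfl⟩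
    obtain ⟨t0, ht0⟩ := z3_solve (((α : ZMod 9).val : ZMod 3)) t (unit_cast3_ne α)
    refine mem_Om_iff.2 ⟨α, t0, 0, rfl, ?_⟩
    show (α : ZMod 9).val • g.1 + (fun i => t * red (g.2.2 i)) = _
    rw [hθ, smul_zero, add_zero]
    have hh21 : ((α : ZMod 9).val • g.2).1 = 0 := by rw [smul_s, hs, mul_zero]
    rw [hh21]
    funext i
    simp only [Pi.add_apply, Pi.sub_apply, Pi.zero_apply, zero_mul, sub_zero]
    have : red (((α : ZMod 9).val • g.2).2 i) = (((α : ZMod 9).val : ZMod 3)) * red (g.2.2 i) := by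
      show red ((α : ZMod 9).val • g.2.2 i) = _
      exact red_nsmul _ _
    rw [this, ← ht0]
    ring

lemma z3_mul_right_cancel : ∀ t t' c : ZMod 3, c ≠ 0 → t * c = t' * c → t = t' := by decide
lemma z9_val_natCast : ∀ x : ZMod 9, ((x.val : ℕ) : ZMod 9) = x := by decide
lemma totient9 : Nat.totient 9 = 6 := by decide

lemma card_units9 : Nat.card (ZMod 9)ˣ = 6 := by
  rw [Nat.card_eq_fintype_card, ZMod.card_units_eq_totient, totient9]

lemma card_fun3 : Nat.card (Fin n → ZMod 3) = 3 ^ n := by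
  rw [Nat.card_eq_fintype_card, Fintype.card_fun, ZMod.card, Fintype.card_fin]

lemma g_ne_inv {g : Gn n} (hne : g ≠ 1) (hs : g.2.1 = 0) (hrv : ∀ i, red (g.2.2 i) = 0) :
    g ≠ g⁻¹ := by
  have hθ : theta g.2 g.2 = 0 := theta_self_zero hs
  intro he
  apply hne
  have hinv : g⁻¹ = (-g.1, -g.2) := by
    rw [inv_def, hθ, add_zero]
  have hg : g = (-g.1, -g.2) := he.trans hinv
  have h1 : g.1 = -g.1 := congrArg Prod.fst hg
  have h2 : g.2 = -g.2 := congrArg Prod.snd hg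
  rw [one_def]
  apply Prod.ext
  · funext i
    exact z3_eq_neg_self _ (congrFun h1 i)
  · apply Prod.ext
    · exact z3_eq_neg_self _ (congrArg Prod.fst h2)
    · funext i
      exact z9_eq_neg_self _ (congrFun (congrArg Prod.snd h2) i)

lemma card_Om_P1 {g : Gn n} (hne : g ≠ 1) (hs : g.2.1 = 0) (hrv : ∀ i, red (g.2.2 i) = 0) :
    Nat.card (Om g) = 2 := by
  rw [Om_P1 hs hrv, Nat.card_coe_set_eq, Set.ncard_pair (g_ne_inv hne hs hrv)]

/-- split a subtype over second-coordinate membership -/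
def sliceEquiv (S : Set (An n)) :
    {h : Gn n // h.2 ∈ S} ≃ (Fin n → ZMod 3) × S where
  toFun h := (h.1.1, ⟨h.1.2, h.2⟩)
  invFun p := ⟨(p.1, p.2.1), p.2.2⟩
  left_inv h := rfl
  right_inv p := rfl

lemma card_slice (S : Set (An n)) :
    Nat.card {h : Gn n // h.2 ∈ S} = 3 ^ n * Nat.card S := by
  rw [Nat.card_congr (sliceEquiv S), Nat.card_prod, card_fun3]

lemma card_Om_P2 {g : Gn n} (hs : g.2.1 ≠ 0) (hrv : ∀ i, red (g.2.2 i) = 0) :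
    Nat.card (Om g) = 3 ^ n * 2 := by
  rw [Om_P2 hs hrv]
  have hne : g.2 ≠ -g.2 := by
    intro he
    exact z3_neg_ne _ hs (congrArg Prod.fst he)
  have : {h : Gn n | h.2 = g.2 ∨ h.2 = -g.2} = {h : Gn n | h.2 ∈ ({g.2, -g.2} : Set (An n))} := rfl
  rw [this]
  have := card_slice (n := n) ({g.2, -g.2} : Set (An n))
  rw [Nat.card_coe_set_eq, Set.ncard_pair hne] at this
  exact this

lemma unit_smul_inj {g : Gn n} (hrv : ¬ ∀ i, red (g.2.2 i) = 0) :
    Function.Injective (fun α : (ZMod 9)ˣ => (α : ZMod 9).val • g.2) := by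
  intro α β he
  push_neg at hrv
  obtain ⟨i, hi⟩ := hrv
  have h2 : (α : ZMod 9).val • g.2.2 i = (β : ZMod 9).val • g.2.2 i :=
    congrFun (congrArg Prod.snd he) i
  rw [nsmul_eq_mul, nsmul_eq_mul, z9_val_natCast, z9_val_natCast] at h2
  have : ((α : ZMod 9) - (β : ZMod 9)) * g.2.2 i = 0 := by
    rw [sub_mul, h2, sub_self]
  have := z9_cancel _ hi _ this
  exact Units.ext (by linear_combination this)

lemma card_Om_P3 {g : Gn n} (hs : g.2.1 ≠ 0) (hrv : ¬ ∀ i, red (g.2.2 i) = 0) :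
    Nat.card (Om g) = 3 ^ n * 6 := by
  rw [Om_P3 hs]
  have : {h : Gn n | ∃ α : (ZMod 9)ˣ, (α : ZMod 9).val • g.2 = h.2}
      = {h : Gn n | h.2 ∈ Set.range (fun α : (ZMod 9)ˣ => (α : ZMod 9).val • g.2)} := rfl
  rw [this]
  have hc := card_slice (n := n) (Set.range (fun α : (ZMod 9)ˣ => (α : ZMod 9).val • g.2))
  rw [Nat.card_range_of_injective (unit_smul_inj hrv), card_units9] at hc
  exact hc

lemma card_Om_P4 {g : Gn n} (hs : g.2.1 = 0) (hrv : ¬ ∀ i, red (g.2.2 i) = 0) :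
    Nat.card (Om g) = 18 := by
  rw [Om_P4 hs]
  have hinj : Function.Injective (fun p : (ZMod 9)ˣ × ZMod 3 =>
      ((((p.1 : ZMod 9).val) • g.1 + fun i => p.2 * red (g.2.2 i)),
        ((p.1 : ZMod 9).val) • g.2) : (ZMod 9)ˣ × ZMod 3 → Gn n) := by
    rintro ⟨α, t⟩ ⟨β, t'⟩ he
    have hab : α = β := unit_smul_inj hrv (congrArg Prod.snd he)
    subst hab
    push_neg at hrv
    obtain ⟨i, hi⟩ := hrv
    have h1 := congrArg Prod.fst he
    simp only at h1
    have h1' := congrFun (add_left_cancel h1) i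
    have ht : t = t' := z3_mul_right_cancel _ _ _ hi h1'
    rw [ht]
  refine (Nat.card_range_of_injective hinj).trans ?_
  rw [Nat.card_prod, card_units9,
    Nat.card_eq_fintype_card, ZMod.card]

lemma count_key (P : Gn n → Prop) (k : ℕ)
    (hinv : ∀ g h : Gn n, P g → h ∈ Om g → P h)
    (hcard : ∀ g : Gn n, P g → Nat.card (Om g) = k) :
    Nat.card {O : Set (Gn n) // ∃ g, P g ∧ O = Om g} * k = Nat.card {g : Gn n // P g} := by
  classical
  let T := {O : Set (Gn n) // ∃ g, P g ∧ O = Om g}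
  let e : {g : Gn n // P g} → T := fun g => ⟨Om g.1, g.1, g.2, rfl⟩
  have key : ∀ O : T, Nat.card {g : {g : Gn n // P g} // e g = O} = k := by
    rintro ⟨O, g₀, hg₀, rfl⟩
    have equ : {g : {g : Gn n // P g} // e g = ⟨Om g₀, g₀, hg₀, rfl⟩} ≃ (Om g₀ : Set (Gn n)) :=
      { toFun := fun p => ⟨p.1.1, by
          have h : Om p.1.1 = Om g₀ := congrArg Subtype.val p.2
          have hm := self_mem_Om (p.1.1 : Gn n)
          rwa [h] at hm⟩
        invFun := fun h => ⟨⟨h.1, hinv g₀ h.1 hg₀ h.2⟩, Subtype.ext (Om_eq_of_mem h.2)⟩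
        left_inv := fun p => by ext; rfl
        right_inv := fun h => rfl }
    rw [Nat.card_congr equ, hcard g₀ hg₀]
  letI : Fintype T := Fintype.ofFinite T
  letI : ∀ O : T, Fintype {g : {g : Gn n // P g} // e g = O} := fun O => Fintype.ofFinite _
  have h1 : Nat.card {g : Gn n // P g} = Nat.card (Σ O : T, {g : {g : Gn n // P g} // e g = O}) :=
    (Nat.card_congr (Equiv.sigmaFiberEquiv e)).symm
  have h3 : Nat.card (Σ O : T, {g : {g : Gn n // P g} // e g = O})
      = ∑ O : T, Nat.card {g : {g : Gn n // P g} // e g = O} := by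
    rw [Nat.card_eq_fintype_card, Fintype.card_sigma]
    exact Finset.sum_congr rfl (fun O _ => (Nat.card_eq_fintype_card).symm)
  have h4 : (∑ O : T, Nat.card {g : {g : Gn n // P g} // e g = O}) = ∑ _O : T, k :=
    Finset.sum_congr rfl fun O _ => key O
  rw [h1, h3, h4, Finset.sum_const, smul_eq_mul, Finset.card_univ]
  rw [Nat.card_eq_fintype_card]

def splitEquiv (Ps : ZMod 3 → Prop) (Pv : (Fin n → ZMod 9) → Prop) :
    {g : Gn n // Ps g.2.1 ∧ Pv g.2.2} ≃ (Fin n → ZMod 3) × {s // Ps s} × {v // Pv v} where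
  toFun g := (g.1.1, ⟨g.1.2.1, g.2.1⟩, ⟨g.1.2.2, g.2.2⟩)
  invFun p := ⟨(p.1, p.2.1.1, p.2.2.1), p.2.1.2, p.2.2.2⟩
  left_inv g := rfl
  right_inv p := rfl

lemma card_split (Ps : ZMod 3 → Prop) (Pv : (Fin n → ZMod 9) → Prop) :
    Nat.card {g : Gn n // Ps g.2.1 ∧ Pv g.2.2}
      = 3 ^ n * (Nat.card {s // Ps s} * Nat.card {v // Pv v}) := by
  rw [Nat.card_congr (splitEquiv Ps Pv), Nat.card_prod, Nat.card_prod, card_fun3]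

lemma card_s_eq : Nat.card {s : ZMod 3 // s = 0} = 1 := by
  rw [Nat.card_eq_fintype_card]; decide

lemma card_s_ne : Nat.card {s : ZMod 3 // s ≠ 0} = 2 := by
  rw [Nat.card_eq_fintype_card]; decide

lemma card_red9 : Nat.card {x : ZMod 9 // red x = 0} = 3 := by
  rw [Nat.card_eq_fintype_card]; decide

lemma card_v_eq : Nat.card {v : Fin n → ZMod 9 // ∀ i, red (v i) = 0} = 3 ^ n := by
  rw [Nat.card_congr (Equiv.subtypePiEquivPi (p := fun _ x => red x = 0)), Nat.card_pi,
    Finset.prod_congr rfl (fun i _ => card_red9), Finset.prod_const, Finset.card_univ,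
    Fintype.card_fin]

lemma card_v_ne : Nat.card {v : Fin n → ZMod 9 // ¬ ∀ i, red (v i) = 0} = 9 ^ n - 3 ^ n := by
  classical
  have hc : Nat.card {v : Fin n → ZMod 9 // ¬ ∀ i, red (v i) = 0}
      = Nat.card (Fin n → ZMod 9) - Nat.card {v : Fin n → ZMod 9 // ∀ i, red (v i) = 0} := by
    rw [Nat.card_eq_fintype_card, Nat.card_eq_fintype_card, Nat.card_eq_fintype_card]
    exact Fintype.card_subtype_compl _
  have h9 : Nat.card (Fin n → ZMod 9) = 9 ^ n := by
    rw [Nat.card_eq_fintype_card, Fintype.card_fun, ZMod.card, Fintype.card_fin]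
  rw [hc, card_v_eq, h9]

lemma card_U : Nat.card {g : Gn n // g.2.1 = 0 ∧ ∀ i, red (g.2.2 i) = 0} = 3 ^ n * 3 ^ n := by
  have h := card_split (n := n) (fun s => s = 0) (fun v => ∀ i, red (v i) = 0)
  rw [card_s_eq, card_v_eq, one_mul] at h
  exact h

lemma one_mem_U : (1 : Gn n) ∈ {g : Gn n | g.2.1 = 0 ∧ ∀ i, red (g.2.2 i) = 0} := by
  refine ⟨rfl, fun i => ?_⟩
  show red 0 = 0
  exact map_zero red

lemma card_N1 : Nat.card {g : Gn n // g ≠ 1 ∧ g.2.1 = 0 ∧ ∀ i, red (g.2.2 i) = 0}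
    = 3 ^ n * 3 ^ n - 1 := by
  classical
  have he : {g : Gn n // g ≠ 1 ∧ g.2.1 = 0 ∧ ∀ i, red (g.2.2 i) = 0}
      ≃ ({g : Gn n | g.2.1 = 0 ∧ ∀ i, red (g.2.2 i) = 0} \ {1} : Set (Gn n)) :=
    Equiv.subtypeEquivRight (fun g => by
      simp only [Set.mem_diff, Set.mem_setOf_eq, Set.mem_singleton_iff]
      tauto)
  have hU : ({g : Gn n | g.2.1 = 0 ∧ ∀ i, red (g.2.2 i) = 0}).ncard = 3 ^ n * 3 ^ n := by
    rw [← Nat.card_coe_set_eq]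
    exact card_U
  rw [Nat.card_congr he, Nat.card_coe_set_eq,
    Set.ncard_diff_singleton_of_mem (one_mem_U (n := n)), hU]

lemma card_N2 : Nat.card {g : Gn n // g.2.1 ≠ 0 ∧ ∀ i, red (g.2.2 i) = 0}
    = 3 ^ n * (2 * 3 ^ n) := by
  have h := card_split (n := n) (fun s => s ≠ 0) (fun v => ∀ i, red (v i) = 0)
  rw [card_s_ne, card_v_eq] at h
  exact h

lemma card_N3 : Nat.card {g : Gn n // g.2.1 ≠ 0 ∧ ¬ ∀ i, red (g.2.2 i) = 0}
    = 3 ^ n * (2 * (9 ^ n - 3 ^ n)) := by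
  have h := card_split (n := n) (fun s => s ≠ 0) (fun v => ¬ ∀ i, red (v i) = 0)
  rw [card_s_ne, card_v_ne] at h
  exact h

lemma card_N4 : Nat.card {g : Gn n // g.2.1 = 0 ∧ ¬ ∀ i, red (g.2.2 i) = 0}
    = 3 ^ n * (1 * (9 ^ n - 3 ^ n)) := by
  have h := card_split (n := n) (fun s => s = 0) (fun v => ¬ ∀ i, red (v i) = 0)
  rw [card_s_eq, card_v_ne] at h
  exact h

lemma disjS (P Q : Gn n → Prop)
    (hPinv : ∀ g h : Gn n, P g → h ∈ Om g → P h)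
    (hexcl : ∀ g : Gn n, P g → Q g → False) :
    Disjoint {O : Set (Gn n) | ∃ g, P g ∧ O = Om g} {O : Set (Gn n) | ∃ g, Q g ∧ O = Om g} := by
  rw [Set.disjoint_left]
  rintro O ⟨g, hg, rfl⟩ ⟨g', hg', hO⟩
  have hmem := self_mem_Om g'
  rw [← hO] at hmem
  exact hexcl g' (hPinv g g' hg hmem) hg'

lemma one_s : (1 : Gn n).2.1 = 0 := rfl
lemma one_rv : ∀ i, red ((1 : Gn n).2.2 i) = 0 := fun i => map_zero red

lemma final (n : ℕ) :
    (Nat.card {O : Set (Gn n) // ∃ g : Gn n, g ≠ 1 ∧ O = Om g} : ℚ)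
      = ((3 : ℚ) ^ n - 1) / 2 + ((9 : ℚ) ^ n - 3 ^ n) / 3 + 3 ^ n
        + 3 ^ n * ((3 : ℚ) ^ n - 1) / 2 + 3 ^ n * ((9 : ℚ) ^ n - 3 ^ n) / 18 := by
  classical
  set P1 : Gn n → Prop := fun g => g ≠ 1 ∧ g.2.1 = 0 ∧ ∀ i, red (g.2.2 i) = 0 with hP1
  set P2 : Gn n → Prop := fun g => g.2.1 ≠ 0 ∧ ∀ i, red (g.2.2 i) = 0 with hP2
  set P3 : Gn n → Prop := fun g => g.2.1 ≠ 0 ∧ ¬ ∀ i, red (g.2.2 i) = 0 with hP3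
  set P4 : Gn n → Prop := fun g => g.2.1 = 0 ∧ ¬ ∀ i, red (g.2.2 i) = 0 with hP4
  have inv1 : ∀ g h : Gn n, P1 g → h ∈ Om g → P1 h := by
    rintro g h ⟨h1, h2, h3⟩ hm
    exact ⟨ne_one_of_mem h1 hm, (s_zero_iff hm).1 h2, (rv_zero_iff hm).1 h3⟩
  have inv2 : ∀ g h : Gn n, P2 g → h ∈ Om g → P2 h := by
    rintro g h ⟨h2, h3⟩ hm
    exact ⟨fun h0 => h2 ((s_zero_iff hm).2 h0), (rv_zero_iff hm).1 h3⟩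
  have inv3 : ∀ g h : Gn n, P3 g → h ∈ Om g → P3 h := by
    rintro g h ⟨h2, h3⟩ hm
    exact ⟨fun h0 => h2 ((s_zero_iff hm).2 h0), fun hall => h3 ((rv_zero_iff hm).2 hall)⟩
  have inv4 : ∀ g h : Gn n, P4 g → h ∈ Om g → P4 h := by
    rintro g h ⟨h2, h3⟩ hm
    exact ⟨(s_zero_iff hm).1 h2, fun hall => h3 ((rv_zero_iff hm).2 hall)⟩
  set S1 : Set (Set (Gn n)) := {O : Set (Gn n) | ∃ g, P1 g ∧ O = Om g} with hS1
  set S2 : Set (Set (Gn n)) := {O : Set (Gn n) | ∃ g, P2 g ∧ O = Om g} with hS2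
  set S3 : Set (Set (Gn n)) := {O : Set (Gn n) | ∃ g, P3 g ∧ O = Om g} with hS3
  set S4 : Set (Set (Gn n)) := {O : Set (Gn n) | ∃ g, P4 g ∧ O = Om g} with hS4
  have hk1 : S1.ncard * 2 = 3 ^ n * 3 ^ n - 1 := by
    rw [← Nat.card_coe_set_eq, ← card_N1 (n := n)]
    exact count_key P1 2 inv1 (fun g hg => card_Om_P1 hg.1 hg.2.1 hg.2.2)
  have hk2 : S2.ncard * (3 ^ n * 2) = 3 ^ n * (2 * 3 ^ n) := by
    rw [← Nat.card_coe_set_eq, ← card_N2 (n := n)]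
    exact count_key P2 (3 ^ n * 2) inv2 (fun g hg => card_Om_P2 hg.1 hg.2)
  have hk3 : S3.ncard * (3 ^ n * 6) = 3 ^ n * (2 * (9 ^ n - 3 ^ n)) := by
    rw [← Nat.card_coe_set_eq, ← card_N3 (n := n)]
    exact count_key P3 (3 ^ n * 6) inv3 (fun g hg => card_Om_P3 hg.1 hg.2)
  have hk4 : S4.ncard * 18 = 3 ^ n * (1 * (9 ^ n - 3 ^ n)) := by
    rw [← Nat.card_coe_set_eq, ← card_N4 (n := n)]
    exact count_key P4 18 inv4 (fun g hg => card_Om_P4 hg.1 hg.2)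
  -- the partition
  have hM : {O : Set (Gn n) | ∃ g : Gn n, g ≠ 1 ∧ O = Om g} = (S1 ∪ S2) ∪ (S3 ∪ S4) := by
    ext O
    constructor
    · rintro ⟨g, hg, rfl⟩
      by_cases hs : g.2.1 = 0
      · by_cases hrv : ∀ i, red (g.2.2 i) = 0
        · exact Or.inl (Or.inl ⟨g, ⟨hg, hs, hrv⟩, rfl⟩)
        · exact Or.inr (Or.inr ⟨g, ⟨hs, hrv⟩, rfl⟩)
      · by_cases hrv : ∀ i, red (g.2.2 i) = 0
        · exact Or.inl (Or.inr ⟨g, ⟨hs, hrv⟩, rfl⟩)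
        · exact Or.inr (Or.inl ⟨g, ⟨hs, hrv⟩, rfl⟩)
    · rintro ((⟨g, hg, rfl⟩ | ⟨g, hg, rfl⟩) | (⟨g, hg, rfl⟩ | ⟨g, hg, rfl⟩))
      · exact ⟨g, hg.1, rfl⟩
      · exact ⟨g, fun h1 => hg.1 (by rw [h1]; exact one_s), rfl⟩
      · exact ⟨g, fun h1 => hg.1 (by rw [h1]; exact one_s), rfl⟩
      · exact ⟨g, fun h1 => hg.2 (by rw [h1]; exact one_rv), rfl⟩
  have d12 : Disjoint S1 S2 := disjS P1 P2 inv1 (fun g hg hg' => hg'.1 hg.2.1)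
  have d34 : Disjoint S3 S4 := disjS P3 P4 inv3 (fun g hg hg' => hg.1 hg'.1)
  have d13 : Disjoint S1 S3 := disjS P1 P3 inv1 (fun g hg hg' => hg'.1 hg.2.1)
  have d14 : Disjoint S1 S4 := disjS P1 P4 inv1 (fun g hg hg' => hg'.2 hg.2.2)
  have d23 : Disjoint S2 S3 := disjS P2 P3 inv2 (fun g hg hg' => hg'.2 hg.2)
  have d24 : Disjoint S2 S4 := disjS P2 P4 inv2 (fun g hg hg' => hg.1 hg'.1)
  have dBig : Disjoint (S1 ∪ S2) (S3 ∪ S4) := by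
    rw [Set.disjoint_union_left]
    constructor
    · rw [Set.disjoint_union_right]; exact ⟨d13, d14⟩
    · rw [Set.disjoint_union_right]; exact ⟨d23, d24⟩
  have hcard : Nat.card {O : Set (Gn n) // ∃ g : Gn n, g ≠ 1 ∧ O = Om g}
      = S1.ncard + S2.ncard + S3.ncard + S4.ncard := by
    have h0 : Nat.card {O : Set (Gn n) // ∃ g : Gn n, g ≠ 1 ∧ O = Om g}
        = ({O : Set (Gn n) | ∃ g : Gn n, g ≠ 1 ∧ O = Om g}).ncard :=
      Nat.card_coe_set_eq _
    rw [h0, hM, Set.ncard_union_eq dBig, Set.ncard_union_eq d12, Set.ncard_union_eq d34]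
    ring
  -- pass to ℚ
  have h3pos : (0:ℚ) < (3:ℚ) ^ n := by positivity
  have h91 : (3:ℕ) ^ n ≤ 9 ^ n := Nat.pow_le_pow_left (by norm_num) n
  have h11 : (1:ℕ) ≤ 3 ^ n * 3 ^ n := Nat.one_le_iff_ne_zero.2 (by positivity)
  have q1 : (S1.ncard : ℚ) * 2 = (3:ℚ) ^ n * 3 ^ n - 1 := by
    have h := congrArg (Nat.cast : ℕ → ℚ) hk1
    push_cast [Nat.cast_sub h11] at h
    linear_combination h
  have q2 : (S2.ncard : ℚ) * ((3:ℚ) ^ n * 2) = (3:ℚ) ^ n * (2 * 3 ^ n) := by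
    have h := congrArg (Nat.cast : ℕ → ℚ) hk2
    push_cast at h
    linear_combination h
  have q3 : (S3.ncard : ℚ) * ((3:ℚ) ^ n * 6) = (3:ℚ) ^ n * (2 * ((9:ℚ) ^ n - 3 ^ n)) := by
    have h := congrArg (Nat.cast : ℕ → ℚ) hk3
    push_cast [Nat.cast_sub h91] at h
    linear_combination h
  have q4 : (S4.ncard : ℚ) * 18 = (3:ℚ) ^ n * (1 * ((9:ℚ) ^ n - 3 ^ n)) := by
    have h := congrArg (Nat.cast : ℕ → ℚ) hk4
    push_cast [Nat.cast_sub h91] at h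
    linear_combination h
  have e1 : (S1.ncard : ℚ) = ((3:ℚ) ^ n * 3 ^ n - 1) / 2 := by linarith [q1]
  have e2 : (S2.ncard : ℚ) = (3:ℚ) ^ n := by
    have hne : ((3:ℚ) ^ n * 2) ≠ 0 := by positivity
    have hr : ((3:ℚ) ^ n) * ((3:ℚ) ^ n * 2) = (3:ℚ) ^ n * (2 * 3 ^ n) := by ring
    exact mul_right_cancel₀ hne (q2.trans hr.symm)
  have e3 : (S3.ncard : ℚ) = ((9:ℚ) ^ n - 3 ^ n) / 3 := by
    have hne : ((3:ℚ) ^ n * 6) ≠ 0 := by positivity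
    have : (((9:ℚ) ^ n - 3 ^ n) / 3) * ((3:ℚ) ^ n * 6) = (3:ℚ) ^ n * (2 * ((9:ℚ) ^ n - 3 ^ n)) := by
      ring
    exact mul_right_cancel₀ hne (q3.trans this.symm)
  have e4 : (S4.ncard : ℚ) = (3:ℚ) ^ n * ((9:ℚ) ^ n - 3 ^ n) / 18 := by
    have hne : (18:ℚ) ≠ 0 := by norm_num
    have : ((3:ℚ) ^ n * ((9:ℚ) ^ n - 3 ^ n) / 18) * 18 = (3:ℚ) ^ n * (1 * ((9:ℚ) ^ n - 3 ^ n)) := by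
      ring
    exact mul_right_cancel₀ hne (q4.trans this.symm)
  have h9 : (9:ℚ) ^ n = 3 ^ n * 3 ^ n := by
    rw [← mul_pow]; norm_num
  rw [hcard]
  push_cast
  rw [e1, e2, e3, e4, h9]
  ring
end Stmt10

/-- The group `G_n × (ℤ/9)ˣ` acts on the non-identity elements of
`G_n` by `(h, α) · g = h g^α h⁻¹` (where `g^α := g^(α.val)`, well defined since
`g^9 = 1`).  Counting the orbits — encoded here as the distinct orbit sets
`{h | ∃ x α, x g^α x⁻¹ = h}` for non-identity `g` — their number equals
`(3^n − 1)/2 + (9^n − 3^n)/3 + 3^n + 3^n(3^n − 1)/2 + 3^n(9^n − 3^n)/18`. -/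
theorem stmt_10 (n : ℕ) (hn : 1 ≤ n) :
    (Nat.card {O : Set (Gn n) // ∃ g : Gn n, g ≠ 1 ∧
        O = {h : Gn n | ∃ (x : Gn n) (α : (ZMod 9)ˣ),
              x * g ^ ((α : ZMod 9).val) * x⁻¹ = h}} : ℚ)
      = ((3 : ℚ) ^ n - 1) / 2 + ((9 : ℚ) ^ n - 3 ^ n) / 3 + 3 ^ n
        + 3 ^ n * ((3 : ℚ) ^ n - 1) / 2 + 3 ^ n * ((9 : ℚ) ^ n - 3 ^ n) / 18 := by
  exact Stmt10.final n
end

section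
/- Let G be a finite nontrivial group of exponent e, and let U be a subgroup of (ZMod e)ˣ. For α ∈ (ZMod e)ˣ and g ∈ G write g^α for g^(α.val) (well-defined since g^e = 1). Declare g ~ h for non-identity g, h ∈ G if there exist α ∈ U and x ∈ G with x * g^α * x⁻¹ = h; this is the orbit equivalence of the action of G × U on G − {1}. For a non-identity g ∈ G, let U_g denote the image of U under the reduction map (ZMod e)ˣ → (ZMod ord(g))ˣ (where ord(g) divides e), and for α ∈ (ZMod ord(g))ˣ set S_{g,α} := {x ∈ G : x * g * x⁻¹ = g^(α.val)}. Then the number of ~-equivalence classes in G − {1} equals, as a rational number, the sum over non-identity g ∈ G of (1/|U_g|) * Σ_{α ∈ U_g} |S_{g,α}| / |G|. -/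
open scoped BigOperators

/-- For a non-identity `g` in a finite group `G` of exponent `e` and a subgroup
`U ≤ (ℤ/e)ˣ`, the image `U_g` of `U` under the reduction map
`(ℤ/e)ˣ → (ℤ/ord(g))ˣ`. -/
noncomputable def Ug {G : Type*} [Group G] (U : Subgroup (ZMod (Monoid.exponent G))ˣ)
    (g : G) : Subgroup (ZMod (orderOf g))ˣ :=
  Subgroup.map
    (Units.map (ZMod.castHom (Monoid.order_dvd_exponent g) (ZMod (orderOf g))).toMonoidHom) U

set_option linter.unusedSectionVars false

namespace Stmt11Aux

lemma comm_cancel {C : Type*} [CommGroup C] (b a : C) : b * (b * a⁻¹)⁻¹ = a := by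
  rw [mul_inv_rev, inv_inv, mul_comm b (a * b⁻¹), inv_mul_cancel_right]

noncomputable def fiberEquiv {H K : Type*} [Group H] [Group K] (ρ : H →* K) {v w : K}
    (hv : ∃ a, ρ a = v) (hw : ∃ b, ρ b = w) :
    {a // ρ a = v} ≃ {a // ρ a = w} where
  toFun x := ⟨hw.choose * hv.choose⁻¹ * x, by
    simp [map_mul, map_inv, hv.choose_spec, hw.choose_spec, x.2, mul_assoc]⟩
  invFun y := ⟨hv.choose * hw.choose⁻¹ * y, by
    simp [map_mul, map_inv, hv.choose_spec, hw.choose_spec, y.2, mul_assoc]⟩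
  left_inv := by intro x; ext; simp; group
  right_inv := by intro y; ext; simp; group

variable {G : Type*} [Group G] [Fintype G] [Nontrivial G]

instance : NeZero (Monoid.exponent G) :=
  ⟨by have := Monoid.one_lt_exponent (G := G); omega⟩

noncomputable def up (α : (ZMod (Monoid.exponent G))ˣ) (h : G) : G :=
  h ^ ((α : ZMod (Monoid.exponent G))).val

lemma pow_natCast_val (g : G) (n : ℕ) :
    g ^ ((n : ZMod (Monoid.exponent G)).val) = g ^ n := by
  rw [ZMod.val_natCast]
  exact (pow_eq_pow_mod n (Monoid.pow_exponent_eq_one g)).symm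

lemma up_up (g : G) (α β : (ZMod (Monoid.exponent G))ˣ) :
    up β (up α g) = up (α * β) g := by
  unfold up
  rw [← pow_mul]
  have h1 : ((α * β : (ZMod (Monoid.exponent G))ˣ) : ZMod (Monoid.exponent G))
      = (((α : ZMod (Monoid.exponent G)).val * (β : ZMod (Monoid.exponent G)).val : ℕ)
        : ZMod (Monoid.exponent G)) := by
    push_cast [ZMod.natCast_val, ZMod.cast_id]
    rfl
  rw [h1, pow_natCast_val]

lemma up_one (g : G) : up (1 : (ZMod (Monoid.exponent G))ˣ) g = g := by
  unfold up
  rw [Units.val_one, ZMod.val_one_eq_one_mod, Nat.mod_eq_of_lt (Monoid.one_lt_exponent), pow_one]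

lemma up_conj (α : (ZMod (Monoid.exponent G))ˣ) (x h : G) :
    up α (x * h * x⁻¹) = x * up α h * x⁻¹ := conj_pow

lemma up_inv_up (α : (ZMod (Monoid.exponent G))ˣ) (h : G) : up α⁻¹ (up α h) = h := by
  rw [up_up, mul_inv_cancel, up_one]

lemma up_injective (α : (ZMod (Monoid.exponent G))ˣ) : Function.Injective (up (G := G) α) :=
  Function.LeftInverse.injective (up_inv_up α)

lemma up_eq_one_iff (α : (ZMod (Monoid.exponent G))ˣ) (h : G) : up α h = 1 ↔ h = 1 := by
  constructor
  · intro hh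
    have : up α h = up α 1 := by simpa [up] using hh
    exact up_injective α this
  · rintro rfl; simp [up]

lemma conj_up_eq_iff (g : G) (α β : (ZMod (Monoid.exponent G))ˣ) (x y : G) :
    x * up α g * x⁻¹ = y * up β g * y⁻¹ ↔
      (y⁻¹ * x) * g * (y⁻¹ * x)⁻¹ = up (β * α⁻¹) g := by
  constructor
  · intro hp
    have h2 := congrArg (up α⁻¹) hp
    rw [up_conj, up_conj, up_inv_up, up_up] at h2
    calc (y⁻¹ * x) * g * (y⁻¹ * x)⁻¹ = y⁻¹ * (x * g * x⁻¹) * y := by group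
      _ = y⁻¹ * (y * up (β * α⁻¹) g * y⁻¹) * y := by rw [h2]
      _ = up (β * α⁻¹) g := by group
  · intro hp
    have h2 : x * g * x⁻¹ = y * up (β * α⁻¹) g * y⁻¹ := by
      calc x * g * x⁻¹ = y * ((y⁻¹ * x) * g * (y⁻¹ * x)⁻¹) * y⁻¹ := by group
        _ = y * up (β * α⁻¹) g * y⁻¹ := by rw [hp]
    have h3 := congrArg (up α) h2
    rw [up_conj, up_conj, up_up, inv_mul_cancel_right] at h3
    exact h3

variable (U : Subgroup (ZMod (Monoid.exponent G))ˣ)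

def rel (g h : G) : Prop :=
  ∃ α ∈ U, ∃ x : G,
    x * g ^ (((α : (ZMod (Monoid.exponent G))ˣ) : ZMod (Monoid.exponent G)).val) * x⁻¹ = h

lemma rel_def (g h : G) : rel U g h ↔ ∃ α ∈ U, ∃ x : G, x * up α g * x⁻¹ = h := Iff.rfl

lemma rel_refl (g : G) : rel U g g :=
  ⟨1, one_mem U, 1, by rw [show g ^ _ = up 1 g from rfl, up_one]; group⟩

lemma rel_symm {g h : G} : rel U g h → rel U h g := by
  rintro ⟨α, hα, x, rfl⟩
  refine ⟨α⁻¹, inv_mem hα, x⁻¹, ?_⟩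
  show x⁻¹ * up α⁻¹ (x * up α g * x⁻¹) * x⁻¹⁻¹ = g
  rw [up_conj, up_inv_up]
  group

lemma rel_trans {g h k : G} : rel U g h → rel U h k → rel U g k := by
  rintro ⟨α, hα, x, rfl⟩ ⟨β, hβ, y, rfl⟩
  refine ⟨α * β, mul_mem hα hβ, y * x, ?_⟩
  show (y * x) * up (α * β) g * (y * x)⁻¹ = y * up β (x * up α g * x⁻¹) * y⁻¹
  rw [up_conj, up_up]
  group

lemma rel_ne_one {g h : G} (hg : g ≠ 1) (hr : rel U g h) : h ≠ 1 := by
  rintro rfl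
  obtain ⟨α, -, x, hx⟩ := hr
  have h2 : up α g = 1 := by
    have c : up α g
        = x⁻¹ * (x * g ^ (((α : (ZMod (Monoid.exponent G))ˣ)
            : ZMod (Monoid.exponent G)).val) * x⁻¹) * x := by
      show up α g = x⁻¹ * (x * up α g * x⁻¹) * x
      group
    rw [hx] at c
    simpa using c
  exact hg ((up_eq_one_iff α g).mp h2)

lemma rel_orbit_eq {g h : G} (hr : rel U g h) : {k | rel U h k} = {k | rel U g k} := by
  ext k
  exact ⟨fun hk => rel_trans U hr hk, fun hk => rel_trans U (rel_symm U hr) hk⟩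

noncomputable def rho (g : G) : ↥U →* ↥(Ug U g) :=
  MonoidHom.subgroupMap
    (Units.map (ZMod.castHom (Monoid.order_dvd_exponent g) (ZMod (orderOf g))).toMonoidHom) U

lemma rho_surjective (g : G) : Function.Surjective (rho U g) :=
  MonoidHom.subgroupMap_surjective _ U

lemma up_eq_pow_rho (g : G) (α : ↥U) :
    up ↑α g = g ^ (((rho U g α : (ZMod (orderOf g))ˣ) : ZMod (orderOf g)).val) := by
  have h1 : ((rho U g α : (ZMod (orderOf g))ˣ) : ZMod (orderOf g))
      = ((((α : (ZMod (Monoid.exponent G))ˣ) : ZMod (Monoid.exponent G)).val : ℕ)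
          : ZMod (orderOf g)) := by
    show ((ZMod.castHom (Monoid.order_dvd_exponent g) (ZMod (orderOf g)))
        ((α : (ZMod (Monoid.exponent G))ˣ) : ZMod (Monoid.exponent G))) = _
    rw [ZMod.castHom_apply, ← ZMod.natCast_val]
  rw [h1, ZMod.val_natCast]
  show g ^ _ = _
  exact pow_eq_pow_mod _ (pow_orderOf_eq_one g)

/-- the stabilizer-type set -/
noncomputable def stabFiberEquiv (g : G) (β : ↥U) (y : G) :
    {p : ↥U × G // p.2 * up ↑p.1 g * p.2⁻¹ = y * up ↑β g * y⁻¹}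
      ≃ {p : ↥U × G // p.2 * g * p.2⁻¹ = up ↑p.1 g} where
  toFun p := ⟨(β * p.1.1⁻¹, y⁻¹ * p.1.2), by
    have h := (conj_up_eq_iff g ↑p.1.1 ↑β p.1.2 y).mp p.2
    simpa using h⟩
  invFun q := ⟨(β * q.1.1⁻¹, y * q.1.2), by
    refine (conj_up_eq_iff g ↑(β * q.1.1⁻¹) ↑β (y * q.1.2) y).mpr ?_
    have hz : y⁻¹ * (y * q.1.2) = q.1.2 := by group
    have hc : (↑β : (ZMod (Monoid.exponent G))ˣ) * (↑(β * q.1.1⁻¹) : (ZMod (Monoid.exponent G))ˣ)⁻¹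
        = ↑q.1.1 := by
      push_cast
      exact comm_cancel _ _
    rw [hz, hc]
    exact q.2⟩
  left_inv := by
    rintro ⟨⟨a, x⟩, hp⟩
    refine Subtype.ext (Prod.ext ?_ ?_)
    · show β * (β * a⁻¹)⁻¹ = a
      exact comm_cancel β a
    · show y * (y⁻¹ * x) = x
      group
  right_inv := by
    rintro ⟨⟨a, x⟩, hp⟩
    refine Subtype.ext (Prod.ext ?_ ?_)
    · show β * (β * a⁻¹)⁻¹ = a
      exact comm_cancel β a
    · show y⁻¹ * (y * x) = x
      group


section Counting

variable [DecidableEq G]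

instance (g : G) : NeZero (orderOf g) := ⟨(orderOf_pos g).ne'⟩

noncomputable local instance : Fintype ↥U := Fintype.ofFinite _

noncomputable local instance (g : G) : Fintype ↥(Ug U g) := Fintype.ofFinite _

lemma orbit_stab (g : G) :
    Nat.card {h : G // rel U g h} * Nat.card {p : ↥U × G // p.2 * g * p.2⁻¹ = up ↑p.1 g}
      = Nat.card ↥U * Nat.card G := by
  classical
  let F : ↥U × G → {h : G // rel U g h} :=
    fun p => ⟨p.2 * up ↑p.1 g * p.2⁻¹, ⟨↑p.1, p.1.2, p.2, rfl⟩⟩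
  have e2 : ∀ h : {h : G // rel U g h}, Nat.card {p : ↥U × G // F p = h}
      = Nat.card {p : ↥U × G // p.2 * g * p.2⁻¹ = up ↑p.1 g} := by
    intro h
    obtain ⟨β, hβ, y, hy⟩ := h.2
    refine Nat.card_congr ((Equiv.subtypeEquivRight (q := fun p : ↥U × G =>
        p.2 * up ↑p.1 g * p.2⁻¹ = y * up ↑(⟨β, hβ⟩ : ↥U) g * y⁻¹) ?_).trans
      (stabFiberEquiv U g ⟨β, hβ⟩ y))
    intro p
    rw [Subtype.ext_iff]
    show p.2 * up ↑p.1 g * p.2⁻¹ = (h : G) ↔ _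
    rw [← hy]
    exact Iff.rfl
  calc Nat.card {h : G // rel U g h} * Nat.card {p : ↥U × G // p.2 * g * p.2⁻¹ = up ↑p.1 g}
      = ∑ h : {h : G // rel U g h}, Nat.card {p : ↥U × G // p.2 * g * p.2⁻¹ = up ↑p.1 g} := by
        rw [Finset.sum_const, Finset.card_univ, smul_eq_mul, Nat.card_eq_fintype_card]
    _ = ∑ h : {h : G // rel U g h}, Nat.card {p : ↥U × G // F p = h} :=
        Finset.sum_congr rfl (fun h _ => (e2 h).symm)
    _ = Nat.card (Σ h : {h : G // rel U g h}, {p : ↥U × G // F p = h}) := by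
        rw [Nat.card_eq_fintype_card
          (α := Σ h : {h : G // rel U g h}, {p : ↥U × G // F p = h}), Fintype.card_sigma]
        exact Finset.sum_congr rfl (fun h _ => Nat.card_eq_fintype_card)
    _ = Nat.card (↥U × G) := Nat.card_congr (Equiv.sigmaFiberEquiv F)
    _ = Nat.card ↥U * Nat.card G := Nat.card_prod _ _

lemma stab_card (g : G) :
    Nat.card {p : ↥U × G // p.2 * g * p.2⁻¹ = up ↑p.1 g}
      = ∑ α : ↥U, Nat.card {x : G // x * g * x⁻¹
          = g ^ (((rho U g α : (ZMod (orderOf g))ˣ) : ZMod (orderOf g)).val)} := by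
  classical
  calc Nat.card {p : ↥U × G // p.2 * g * p.2⁻¹ = up ↑p.1 g}
      = Nat.card ((α : ↥U) × {x : G // x * g * x⁻¹ = up ↑α g}) :=
        Nat.card_congr (Equiv.subtypeProdEquivSigmaSubtype
          (fun (α : ↥U) (x : G) => x * g * x⁻¹ = up ↑α g))
    _ = ∑ α : ↥U, Nat.card {x : G // x * g * x⁻¹ = up ↑α g} := by
        rw [Nat.card_eq_fintype_card
          (α := (α : ↥U) × {x : G // x * g * x⁻¹ = up ↑α g}), Fintype.card_sigma]
        exact Finset.sum_congr rfl (fun α _ => (Nat.card_eq_fintype_card).symm)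
    _ = _ := by
        refine Finset.sum_congr rfl (fun α _ => ?_)
        exact Nat.card_congr (Equiv.subtypeEquivRight (fun x => by rw [up_eq_pow_rho]))

lemma sum_comp_rho (g : G) (f : ↥(Ug U g) → ℕ) :
    ∑ α : ↥U, f (rho U g α)
      = Nat.card {a : ↥U // rho U g a = 1} * ∑ v : ↥(Ug U g), f v := by
  classical
  rw [← Fintype.sum_fiberwise (rho U g) (fun α => f (rho U g α))]
  rw [Finset.mul_sum]
  refine Finset.sum_congr rfl (fun v _ => ?_)
  calc ∑ i : {i : ↥U // rho U g i = v}, f (rho U g ↑i)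
      = ∑ _i : {i : ↥U // rho U g i = v}, f v := by
        refine Finset.sum_congr rfl (fun i _ => by rw [i.2])
    _ = Fintype.card {i : ↥U // rho U g i = v} * f v := by
        rw [Finset.sum_const, Finset.card_univ, smul_eq_mul]
    _ = Nat.card {a : ↥U // rho U g a = 1} * f v := by
        congr 1
        rw [← Nat.card_eq_fintype_card]
        exact Nat.card_congr (fiberEquiv (rho U g) (rho_surjective U g v) ⟨1, map_one _⟩)


set_option maxHeartbeats 2000000 in
lemma rhs_term_eq (g : G) :
    (1 / (Nat.card (Ug U g) : ℚ)) *
      ∑ᶠ (α : (ZMod (orderOf g))ˣ) (_ : α ∈ Ug U g),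
        (Nat.card {x : G // x * g * x⁻¹ = g ^ ((α : ZMod (orderOf g)).val)} : ℚ)
          / (Nat.card G : ℚ)
      = (Nat.card {h : G // rel U g h} : ℚ)⁻¹ := by
  classical
  set n : ℕ := Nat.card G with hn
  set NS : (ZMod (orderOf g))ˣ → ℕ :=
    fun v => Nat.card {x : G // x * g * x⁻¹ = g ^ ((v : ZMod (orderOf g)).val)} with hNS
  set A : ℕ := Nat.card {h : G // rel U g h} with hA
  set S : ℕ := Nat.card {p : ↥U × G // p.2 * g * p.2⁻¹ = up ↑p.1 g} with hSdef
  set K : ℕ := Nat.card {a : ↥U // rho U g a = 1} with hK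
  set T : ℕ := ∑ v : ↥(Ug U g), NS ↑v with hT
  set m : ℕ := Nat.card ↥(Ug U g) with hm
  set u : ℕ := Nat.card ↥U with hu
  -- convert the finsum
  have hfin : (∑ᶠ (α : (ZMod (orderOf g))ˣ) (_ : α ∈ Ug U g), ((NS α : ℚ) / (n : ℚ)))
      = ∑ v : ↥(Ug U g), (NS ↑v : ℚ) / (n : ℚ) := by
    have h1 := finsum_mem_coe_finset (fun α => ((NS α : ℚ) / (n : ℚ)))
      ((Ug U g : Set (ZMod (orderOf g))ˣ).toFinset)
    rw [Set.coe_toFinset] at h1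
    have h2 := Finset.sum_subtype (p := fun α => α ∈ Ug U g) (F := inferInstanceAs (Fintype ↥(Ug U g)))
      ((Ug U g : Set (ZMod (orderOf g))ˣ).toFinset)
      (fun α => by simp [Set.mem_toFinset]) (fun α => ((NS α : ℚ) / (n : ℚ)))
    exact h1.trans h2
  -- the numeric facts
  have hOS : A * S = u * n := orbit_stab U g
  have hS : S = K * T := by
    rw [hSdef, stab_card U g, hT]
    exact sum_comp_rho U g (fun v => NS ↑v)
  have hUm : u = K * m := by
    have h3 := sum_comp_rho U g (fun _ => 1)
    simp only [Finset.sum_const, Finset.card_univ, smul_eq_mul, mul_one] at h3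
    rw [hu, hK, hm, Nat.card_eq_fintype_card (α := ↥U),
      Nat.card_eq_fintype_card (α := ↥(Ug U g))]
    exact h3
  have hK0 : K ≠ 0 := by
    rw [hK]
    have : Nonempty {a : ↥U // rho U g a = 1} := ⟨⟨1, map_one _⟩⟩
    exact Nat.card_pos.ne'
  have hA0 : A ≠ 0 := by
    rw [hA]
    have : Nonempty {h : G // rel U g h} := ⟨⟨g, rel_refl U g⟩⟩
    exact Nat.card_pos.ne'
  have hm0 : m ≠ 0 := by
    rw [hm]
    exact Nat.card_pos.ne'
  have hn0 : n ≠ 0 := by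
    rw [hn]
    exact Nat.card_pos.ne'
  have hAT : A * T = m * n := by
    refine Nat.eq_of_mul_eq_mul_left (Nat.pos_of_ne_zero hK0) ?_
    calc K * (A * T) = A * (K * T) := by ring
      _ = A * S := by rw [hS]
      _ = u * n := hOS
      _ = K * (m * n) := by rw [hUm]; ring
  -- assemble in ℚ
  rw [hfin, ← Finset.sum_div, ← Nat.cast_sum, ← hT]
  have hAq : (A : ℚ) ≠ 0 := Nat.cast_ne_zero.mpr hA0
  have hmq : (m : ℚ) ≠ 0 := Nat.cast_ne_zero.mpr hm0
  have hnq : (n : ℚ) ≠ 0 := Nat.cast_ne_zero.mpr hn0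
  have hATq : (A : ℚ) * (T : ℚ) = (m : ℚ) * (n : ℚ) := by exact_mod_cast hAT
  field_simp
  linarith [hATq]

lemma card_classes_q :
    ((Nat.card {O : Set G // ∃ g : G, g ≠ 1 ∧ O = {h : G | rel U g h}}) : ℚ)
      = ∑ g ∈ Finset.univ.filter (fun g : G => g ≠ 1),
          (Nat.card {h : G // rel U g h} : ℚ)⁻¹ := by
  classical
  set f : G → Set G := fun g => {h : G | rel U g h} with hf
  set S : Finset G := Finset.univ.filter (fun g : G => g ≠ 1) with hSdef
  have hset : {O : Set G | ∃ g : G, g ≠ 1 ∧ O = {h : G | rel U g h}}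
      = ↑(S.image f) := by
    ext O
    simp only [Finset.coe_image, Set.mem_image, Finset.mem_coe, Finset.mem_filter,
      Finset.mem_univ, true_and, Set.mem_setOf_eq, hSdef, hf]
    constructor
    · rintro ⟨g, hg, rfl⟩; exact ⟨g, hg, rfl⟩
    · rintro ⟨g, hg, rfl⟩; exact ⟨g, hg, rfl⟩
  have hL : Nat.card {O : Set G // ∃ g : G, g ≠ 1 ∧ O = {h : G | rel U g h}}
      = (S.image f).card := by
    calc Nat.card {O : Set G // ∃ g : G, g ≠ 1 ∧ O = {h : G | rel U g h}}
        = Set.ncard {O : Set G | ∃ g : G, g ≠ 1 ∧ O = {h : G | rel U g h}} := rfl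
      _ = _ := by rw [hset, Set.ncard_coe_finset]
  rw [hL]
  have hinner : ∀ O ∈ S.image f,
      ∑ g ∈ S.filter (fun g => f g = O), (Nat.card {h : G // rel U g h} : ℚ)⁻¹ = 1 := by
    intro O hO
    obtain ⟨g₀, hg₀S, rfl⟩ := Finset.mem_image.mp hO
    have hg₀ : g₀ ≠ 1 := by
      rw [hSdef] at hg₀S
      exact (Finset.mem_filter.mp hg₀S).2
    have hA0 : (Nat.card {h : G // rel U g₀ h}) ≠ 0 := by
      have : Nonempty {h : G // rel U g₀ h} := ⟨⟨g₀, rel_refl U g₀⟩⟩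
      exact Nat.card_pos.ne'
    have hsummand : ∀ x ∈ S.filter (fun g => f g = f g₀),
        (Nat.card {h : G // rel U x h} : ℚ)⁻¹ = (Nat.card {h : G // rel U g₀ h} : ℚ)⁻¹ := by
      intro x hx
      have hfeq : f x = f g₀ := (Finset.mem_filter.mp hx).2
      have hty : Nat.card {h : G // rel U x h} = Nat.card {h : G // rel U g₀ h} :=
        congrArg Nat.card (congrArg Set.Elem hfeq)
      rw [hty]
    have hcard : (S.filter (fun g => f g = f g₀)).card = Nat.card {h : G // rel U g₀ h} := by
      have hfilter : S.filter (fun g => f g = f g₀)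
          = Finset.univ.filter (fun x => rel U g₀ x) := by
        ext x
        simp only [Finset.mem_filter, Finset.mem_univ, true_and, hSdef]
        constructor
        · rintro ⟨hx1, hx2⟩
          have hx3 : x ∈ f x := rel_refl U x
          rw [hx2] at hx3
          exact hx3
        · intro hx
          exact ⟨rel_ne_one U hg₀ hx, rel_orbit_eq U hx⟩
      rw [hfilter, Nat.card_eq_fintype_card, Fintype.card_subtype]
    rw [Finset.sum_congr rfl hsummand, Finset.sum_const, hcard, nsmul_eq_mul,
      mul_inv_cancel₀ (Nat.cast_ne_zero.mpr hA0)]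
  calc ((S.image f).card : ℚ) = ∑ _O ∈ S.image f, (1 : ℚ) := by
        rw [Finset.sum_const, nsmul_eq_mul, mul_one]
    _ = ∑ O ∈ S.image f, ∑ g ∈ S.filter (fun g => f g = O),
          (Nat.card {h : G // rel U g h} : ℚ)⁻¹ :=
        Finset.sum_congr rfl (fun O hO => (hinner O hO).symm)
    _ = ∑ g ∈ S, (Nat.card {h : G // rel U g h} : ℚ)⁻¹ :=
        Finset.sum_fiberwise_of_maps_to (fun g hg => Finset.mem_image_of_mem f hg) _

end Counting

end Stmt11Aux

/-- Let `G` be a finite nontrivial group of exponent `e` and let `U`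
be a subgroup of `(ℤ/e)ˣ`.  Declare `g ~ h` (for non-identity `g, h`) iff
`x g^α x⁻¹ = h` for some `α ∈ U`, `x ∈ G`; this is the orbit equivalence of the action
of `G × U` on `G − {1}`.  Then the number of `~`-classes — encoded as the number of
distinct orbit sets — equals, in `ℚ`, the sum over non-identity `g` of
`(1/|U_g|) · ∑_{α ∈ U_g} |S_{g,α}| / |G|`, where
`S_{g,α} = {x : x g x⁻¹ = g^α}`. -/
theorem stmt_11 (G : Type*) [Group G] [Fintype G] [DecidableEq G] [Nontrivial G]
    (U : Subgroup (ZMod (Monoid.exponent G))ˣ) :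
    (Nat.card {O : Set G // ∃ g : G, g ≠ 1 ∧
        O = {h : G | ∃ α ∈ U, ∃ x : G,
              x * g ^ (((α : (ZMod (Monoid.exponent G))ˣ) : ZMod (Monoid.exponent G)).val)
                * x⁻¹ = h}} : ℚ)
      = ∑ g ∈ Finset.univ.filter (fun g : G => g ≠ 1),
          (1 / (Nat.card (Ug U g) : ℚ)) *
            ∑ᶠ (α : (ZMod (orderOf g))ˣ) (_ : α ∈ Ug U g),
              (Nat.card {x : G // x * g * x⁻¹ = g ^ ((α : ZMod (orderOf g)).val)} : ℚ)
                / (Nat.card G : ℚ) := by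
  classical
  have h1 : ∀ g ∈ Finset.univ.filter (fun g : G => g ≠ 1),
      (1 / (Nat.card (Ug U g) : ℚ)) *
        ∑ᶠ (α : (ZMod (orderOf g))ˣ) (_ : α ∈ Ug U g),
          (Nat.card {x : G // x * g * x⁻¹ = g ^ ((α : ZMod (orderOf g)).val)} : ℚ)
            / (Nat.card G : ℚ)
      = (Nat.card {h : G // Stmt11Aux.rel U g h} : ℚ)⁻¹ :=
    fun g _ => Stmt11Aux.rhs_term_eq U g
  rw [Finset.sum_congr rfl h1]
  exact Stmt11Aux.card_classes_q U
end

section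
/- Let T_n := {g ∈ G_n : g ≠ 1 and π₀(q_n(g)) = 0}. For a positive integer m, the number of tuples (v_g)_{g ∈ T_n} of positive integers indexed by T_n such that: each v_g is squarefree; the v_g are pairwise coprime; every prime p dividing v_g satisfies p ≡ 1 (mod ord(g)), where ord(g) is the order of g in G_n; and the product of all v_g equals m — is equal to the product over primes p dividing m of w_n(p) if m is squarefree, and equal to 0 if m is not squarefree, where w_n(p) := 9^n − 1 if p ≡ 4 or 7 (mod 9), w_n(p) := 27^n − 1 if p ≡ 1 (mod 9), and w_n(p) := 0 otherwise. -/
/-- The weight `w_n(p)`: `9^n − 1` if `p ≡ 4, 7 (mod 9)`, `27^n − 1` if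
`p ≡ 1 (mod 9)`, and `0` otherwise. -/
def wn (n p : ℕ) : ℕ :=
  if p % 9 = 4 ∨ p % 9 = 7 then 9 ^ n - 1
  else if p % 9 = 1 then 27 ^ n - 1
  else 0


namespace Stmt15Aux
open Gn

variable {n : ℕ}

lemma mul_def (x y : Gn n) : x * y = (x.1 + y.1 + theta x.2 y.2, x.2 + y.2) := rfl

lemma one_def : (1 : Gn n) = ((0 : Fin n → ZMod 3), (0 : An n)) := rfl

lemma cube (g : Gn n) : @Eq (Gn n) (g ^ 3) (0, g.2 + g.2 + g.2) := by
  have key : ∀ a t : ZMod 3, a + a + t + a + (t + t) = 0 := by decide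
  rw [pow_succ, pow_succ, pow_one, mul_def, mul_def]
  refine Prod.ext ?_ rfl
  funext i
  simp only [Pi.add_apply, theta_add_left, Pi.zero_apply]
  exact key (g.1 i) (theta g.2 g.2 i)

lemma pow_nine (g : Gn n) : g ^ 9 = 1 := by
  have h1 : ∀ x : ZMod 3, x + x + x + (x + x + x) + (x + x + x) = 0 := by decide
  have h2 : ∀ x : ZMod 9, x + x + x + (x + x + x) + (x + x + x) = 0 := by decide
  rw [show (9 : ℕ) = 3 * 3 from rfl, pow_mul, cube, cube, one_def]
  refine Prod.ext rfl ?_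
  refine Prod.ext ?_ ?_
  · exact h1 g.2.1
  · funext i
    exact h2 (g.2.2 i)

lemma cube_eq_one_iff (g : Gn n) : g ^ 3 = 1 ↔ g.2 + g.2 + g.2 = 0 := by
  rw [cube, one_def]
  exact ⟨fun h => congrArg Prod.snd h, fun h => by rw [h]⟩

lemma orderOf_dvd_nine (g : Gn n) : orderOf g ∣ 9 :=
  orderOf_dvd_of_pow_eq_one (pow_nine g)

lemma ord_mem (g : Gn n) (hg : g ≠ 1) : orderOf g = 3 ∨ orderOf g = 9 := by
  have h9 : orderOf g ∣ 3 ^ 2 := orderOf_dvd_nine g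
  obtain ⟨k, hk, he⟩ := (Nat.dvd_prime_pow Nat.prime_three).mp h9
  interval_cases k
  · exact absurd (orderOf_eq_one_iff.mp (by simpa using he)) hg
  · left; simpa using he
  · right; simpa using he

/-- The equivalence describing elements with `pi0 (qn g) = 0`. -/
def eA : {g : Gn n // pi0 (Gn.qn g) = 0} ≃ ((Fin n → ZMod 3) × (Fin n → ZMod 9)) where
  toFun g := (g.1.1, g.1.2.2)
  invFun x := ⟨(x.1, (0, x.2)), rfl⟩
  left_inv g := by
    rcases g with ⟨⟨c, a1, a2⟩, h⟩
    have h' : a1 = 0 := h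
    subst h'; rfl
  right_inv x := rfl

/-- The equivalence describing elements with `pi0 (qn g) = 0` and `g ^ 3 = 1`. -/
def eB : {g : Gn n // pi0 (Gn.qn g) = 0 ∧ g ^ 3 = 1} ≃
    ((Fin n → ZMod 3) × (Fin n → {x : ZMod 9 // x + x + x = 0})) where
  toFun g := (g.1.1, fun i => ⟨g.1.2.2 i, by
    have h := (cube_eq_one_iff g.1).mp g.2.2
    have := congrFun (congrArg Prod.snd h) i
    simpa using this⟩)
  invFun x := ⟨(x.1, (0, fun i => (x.2 i).1)), ⟨rfl, by
    refine (cube_eq_one_iff _).mpr ?_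
    refine Prod.ext (by simp) ?_
    funext i
    exact (x.2 i).2⟩⟩
  left_inv g := by
    rcases g with ⟨⟨c, a1, a2⟩, h1, h2⟩
    have h' : a1 = 0 := h1
    subst h'; rfl
  right_inv x := rfl

lemma card_P0 : Nat.card {g : Gn n // pi0 (Gn.qn g) = 0} = 27 ^ n := by
  rw [Nat.card_congr eA, Nat.card_eq_fintype_card, Fintype.card_prod,
    Fintype.card_fun, Fintype.card_fun, ZMod.card, ZMod.card, Fintype.card_fin, ← mul_pow]
  norm_num

lemma card_P3 : Nat.card {g : Gn n // pi0 (Gn.qn g) = 0 ∧ g ^ 3 = 1} = 9 ^ n := by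
  have h3 : Fintype.card {x : ZMod 9 // x + x + x = 0} = 3 := by decide
  rw [Nat.card_congr eB, Nat.card_eq_fintype_card, Fintype.card_prod,
    Fintype.card_fun, Fintype.card_fun, ZMod.card, h3, Fintype.card_fin, ← mul_pow]
  norm_num

lemma card_ne_and {α : Type*} [Fintype α] [DecidableEq α] (P : α → Prop) (a : α) (ha : P a) :
    Nat.card {x : α // x ≠ a ∧ P x} = Nat.card {x : α // P x} - 1 := by
  classical
  rw [Nat.card_eq_fintype_card, Nat.card_eq_fintype_card, Fintype.card_subtype,
    Fintype.card_subtype]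
  rw [show (Finset.univ.filter fun x => x ≠ a ∧ P x) = (Finset.univ.filter P).erase a by
    ext x; simp [Finset.mem_erase, and_comm]]
  rw [Finset.card_erase_of_mem (by simp [ha])]

lemma cardT : Nat.card {g : Gn n // g ≠ 1 ∧ pi0 (Gn.qn g) = 0} = 27 ^ n - 1 := by
  rw [card_ne_and (fun g : Gn n => pi0 (Gn.qn g) = 0) 1 rfl, card_P0]

lemma cardT3 : Nat.card {g : Gn n // g ≠ 1 ∧ (pi0 (Gn.qn g) = 0 ∧ g ^ 3 = 1)} = 9 ^ n - 1 := by
  rw [card_ne_and (fun g : Gn n => pi0 (Gn.qn g) = 0 ∧ g ^ 3 = 1) 1 ⟨rfl, one_pow 3⟩, card_P3]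

lemma card_cond (p : ℕ) :
    Nat.card {g : {g : Gn n // g ≠ 1 ∧ pi0 (Gn.qn g) = 0} //
      p ≡ 1 [MOD orderOf (g : Gn n)]} = wn n p := by
  by_cases h1 : p % 9 = 1
  · -- condition always holds
    have hall : ∀ g : {g : Gn n // g ≠ 1 ∧ pi0 (Gn.qn g) = 0},
        p ≡ 1 [MOD orderOf (g : Gn n)] := by
      intro g
      exact Nat.ModEq.of_dvd (orderOf_dvd_nine (g : Gn n))
        (show p % 9 = 1 % 9 by omega)
    rw [Nat.card_congr (Equiv.subtypeUnivEquiv hall), cardT, wn, if_neg (by omega), if_pos h1]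
  by_cases h47 : p % 9 = 4 ∨ p % 9 = 7
  · -- condition holds iff order 3
    have key : ∀ g : Gn n, g ≠ 1 →
        ((p ≡ 1 [MOD orderOf g]) ↔ g ^ 3 = 1) := by
      intro g hg
      constructor
      · intro hmod
        rcases ord_mem g hg with ho | ho
        · rw [← ho]; exact pow_orderOf_eq_one g
        · rw [ho] at hmod
          have : p % 9 = 1 % 9 := hmod
          omega
      · intro hc
        have hdvd : orderOf g ∣ 3 := orderOf_dvd_of_pow_eq_one hc
        rcases ord_mem g hg with ho | ho
        · rw [ho]
          show p % 3 = 1 % 3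
          omega
        · rw [ho] at hdvd; omega
    have e : {g : {g : Gn n // g ≠ 1 ∧ pi0 (Gn.qn g) = 0} //
        p ≡ 1 [MOD orderOf (g : Gn n)]} ≃
        {g : Gn n // g ≠ 1 ∧ (pi0 (Gn.qn g) = 0 ∧ g ^ 3 = 1)} :=
      (Equiv.subtypeSubtypeEquivSubtypeInter
          (fun g : Gn n => g ≠ 1 ∧ pi0 (Gn.qn g) = 0)
          (fun g => p ≡ 1 [MOD orderOf g])).trans
        (Equiv.subtypeEquivRight (fun g => by
          constructor
          · rintro ⟨⟨hg, hp⟩, hm⟩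
            exact ⟨hg, hp, (key g hg).mp hm⟩
          · rintro ⟨hg, hp, hc⟩
            exact ⟨⟨hg, hp⟩, (key g hg).mpr hc⟩))
    rw [Nat.card_congr e, cardT3, wn, if_pos h47]
  · -- no g works
    have : IsEmpty {g : {g : Gn n // g ≠ 1 ∧ pi0 (Gn.qn g) = 0} //
        p ≡ 1 [MOD orderOf (g : Gn n)]} := by
      constructor
      rintro ⟨⟨g, hg, hpi⟩, hm⟩
      have h3 : p % 3 = 1 := by
        rcases ord_mem g hg with ho | ho <;> rw [ho] at hm
        · have : p % 3 = 1 % 3 := hm; omega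
        · have h9 : p % 9 = 1 % 9 := hm
          have := Nat.mod_mod_of_dvd p (by norm_num : (3 : ℕ) ∣ 9)
          omega
      have := Nat.mod_mod_of_dvd p (by norm_num : (3 : ℕ) ∣ 9)
      omega
    rw [Nat.card_of_isEmpty, wn, if_neg h47, if_neg h1]

/-- Abbreviation for the index type `T_n`. -/
abbrev T (n : ℕ) := {g : Gn n // g ≠ 1 ∧ pi0 (Gn.qn g) = 0}

/-- The type of admissible assignments of group elements to prime factors. -/
abbrev Pn (n m : ℕ) := ∀ p : m.primeFactors,
  {g : T n // (p : ℕ) ≡ 1 [MOD orderOf ((g : T n) : Gn n)]}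

/-- From an assignment of primes to group elements, the tuple `v`. -/
def Bmap (m : ℕ) (f : Pn n m) (g : T n) : ℕ :=
  ∏ p ∈ m.primeFactors.attach.filter (fun p => ((f p : T n) = g)), (p : ℕ)

variable {m : ℕ}

lemma prod_attach_pf (hsq : Squarefree m) :
    ∏ p ∈ m.primeFactors.attach, (p : ℕ) = m := by
  exact (Finset.prod_attach m.primeFactors id).trans
    (Nat.prod_primeFactors_of_squarefree hsq)

lemma Bmap_dvd (hsq : Squarefree m) (f : Pn n m) (g : T n) : Bmap m f g ∣ m :=
  (Finset.prod_dvd_prod_of_subset _ _ _ (Finset.filter_subset _ _)).trans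
    (prod_attach_pf hsq).dvd

lemma dvd_Bmap_iff (f : Pn n m) (g : T n) (q : ℕ) (hq : q.Prime) :
    q ∣ Bmap m f g ↔ ∃ hqm : q ∈ m.primeFactors, (f ⟨q, hqm⟩ : T n) = g := by
  constructor
  · intro hdvd
    obtain ⟨p, hp, hqp⟩ := hq.prime.exists_mem_finset_dvd hdvd
    have hpp : (p : ℕ).Prime := Nat.prime_of_mem_primeFactors p.2
    obtain rfl : q = (p : ℕ) := (Nat.prime_dvd_prime_iff_eq hq hpp).mp hqp
    refine ⟨p.2, ?_⟩
    have h := (Finset.mem_filter.mp hp).2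
    rw [Subtype.coe_eta]
    exact h
  · rintro ⟨hqm, hfq⟩
    exact Finset.dvd_prod_of_mem _
      (Finset.mem_filter.mpr ⟨Finset.mem_attach _ ⟨q, hqm⟩, hfq⟩)

lemma Bmap_pos (f : Pn n m) (g : T n) : 0 < Bmap m f g :=
  Finset.prod_pos fun p _ => (Nat.prime_of_mem_primeFactors p.2).pos

lemma Bmap_prod (hsq : Squarefree m) (f : Pn n m) : ∏ g, Bmap m f g = m :=
  (Finset.prod_fiberwise_of_maps_to (fun p _ => Finset.mem_univ _) _).trans
    (prod_attach_pf hsq)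

lemma squarefree_prod {ι : Type*} (s : Finset ι) (v : ι → ℕ)
    (h1 : ∀ i ∈ s, Squarefree (v i))
    (h2 : ∀ i ∈ s, ∀ j ∈ s, i ≠ j → Nat.Coprime (v i) (v j)) :
    Squarefree (∏ i ∈ s, v i) := by
  classical
  induction s using Finset.cons_induction with
  | empty => simpa using squarefree_one
  | cons a s ha ih =>
    rw [Finset.prod_cons, Nat.squarefree_mul (Nat.Coprime.prod_right fun i hi =>
      h2 a (Finset.mem_cons_self a s) i (Finset.mem_cons_of_mem hi)
        (by rintro rfl; exact ha hi))]
    exact ⟨h1 a (Finset.mem_cons_self a s),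
      ih (fun i hi => h1 i (Finset.mem_cons_of_mem hi))
        (fun i hi j hj => h2 i (Finset.mem_cons_of_mem hi) j (Finset.mem_cons_of_mem hj))⟩

lemma card_S (n : ℕ) (hm : 0 < m) (hsq : Squarefree m) :
    Nat.card {v : {g : Gn n // g ≠ 1 ∧ pi0 (Gn.qn g) = 0} → ℕ //
        (∀ g, 0 < v g ∧ Squarefree (v g)) ∧
        (∀ g h, g ≠ h → Nat.Coprime (v g) (v h)) ∧
        (∀ g p, p.Prime → p ∣ v g → p ≡ 1 [MOD orderOf (g : Gn n)]) ∧
        ∏ g, v g = m} = ∏ p ∈ m.primeFactors, wn n p := by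
  classical
  have huniq : ∀ (v : T n → ℕ), (∀ g h, g ≠ h → Nat.Coprime (v g) (v h)) →
      ∀ q : ℕ, q.Prime → ∀ g h, q ∣ v g → q ∣ v h → g = h := by
    intro v hcop q hq g h hg hh
    by_contra hne
    have hd : q ∣ 1 := (hcop g h hne) ▸ Nat.dvd_gcd hg hh
    exact hq.ne_one (Nat.dvd_one.mp hd)
  have hmem : ∀ f : Pn n m,
      (∀ g, 0 < Bmap m f g ∧ Squarefree (Bmap m f g)) ∧
      (∀ g h, g ≠ h → Nat.Coprime (Bmap m f g) (Bmap m f h)) ∧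
      (∀ g p, p.Prime → p ∣ Bmap m f g → p ≡ 1 [MOD orderOf (g : Gn n)]) ∧
      ∏ g, Bmap m f g = m := by
    intro f
    refine ⟨fun g => ⟨Bmap_pos f g, Squarefree.squarefree_of_dvd (Bmap_dvd hsq f g) hsq⟩,
      ?_, ?_, Bmap_prod hsq f⟩
    · intro g h hne
      refine Nat.coprime_of_dvd fun q hq hqg hqh => absurd ?_ hne
      obtain ⟨hqm, hfg⟩ := (dvd_Bmap_iff f g q hq).mp hqg
      obtain ⟨hqm', hfh⟩ := (dvd_Bmap_iff f h q hq).mp hqh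
      rw [← hfg, ← hfh]
    · intro g p hp hdvd
      obtain ⟨hqm, hfg⟩ := (dvd_Bmap_iff f g p hp).mp hdvd
      have h2 := (f ⟨p, hqm⟩).2
      rwa [hfg] at h2
  refine Eq.trans (Nat.card_congr (Equiv.ofBijective
    (fun f : Pn n m => ⟨Bmap m f, hmem f⟩) ⟨?_, ?_⟩).symm) ?_
  · -- injectivity
    intro f f' hff
    have hB : ∀ g, Bmap m f g = Bmap m f' g :=
      fun g => congrFun (congrArg Subtype.val hff) g
    funext p
    apply Subtype.ext
    have h1 : (p : ℕ) ∣ Bmap m f (f p : T n) :=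
      (dvd_Bmap_iff f _ _ (Nat.prime_of_mem_primeFactors p.2)).mpr
        ⟨p.2, by rw [Subtype.coe_eta]⟩
    rw [hB] at h1
    obtain ⟨hqm, hfq⟩ := (dvd_Bmap_iff f' _ _ (Nat.prime_of_mem_primeFactors p.2)).mp h1
    rw [← hfq, Subtype.coe_eta]
  · -- surjectivity
    rintro ⟨v, h1, h2, h3, h4⟩
    have hex : ∀ p : m.primeFactors, ∃ g : T n, (p : ℕ) ∣ v g := by
      intro p
      have hpm : (p : ℕ) ∣ ∏ g, v g :=
        (Nat.dvd_of_mem_primeFactors p.2).trans (dvd_of_eq h4.symm)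
      obtain ⟨g, -, hg⟩ :=
        (Nat.prime_of_mem_primeFactors p.2).prime.exists_mem_finset_dvd hpm
      exact ⟨g, hg⟩
    refine ⟨fun p => ⟨Classical.choose (hex p),
      h3 _ _ (Nat.prime_of_mem_primeFactors p.2) (Classical.choose_spec (hex p))⟩, ?_⟩
    apply Subtype.ext
    funext g
    show Bmap m _ g = v g
    have hvg : (∏ q ∈ (v g).primeFactors, q) = v g :=
      Nat.prod_primeFactors_of_squarefree (h1 g).2
    rw [← hvg]
    refine Finset.prod_bij (fun p _ => (p : ℕ)) ?_ ?_ ?_ (fun a ha => rfl)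
    · intro a ha
      have hfa : Classical.choose (hex a) = g := (Finset.mem_filter.mp ha).2
      refine Nat.mem_primeFactors.mpr ⟨Nat.prime_of_mem_primeFactors a.2, ?_, (h1 g).1.ne'⟩
      have hspec := Classical.choose_spec (hex a)
      rwa [hfa] at hspec
    · intro a₁ h₁ a₂ h₂ hh
      exact Subtype.ext hh
    · intro b hb
      have hbp : b.Prime := Nat.prime_of_mem_primeFactors hb
      have hbdvd : b ∣ v g := Nat.dvd_of_mem_primeFactors hb
      have hbm : b ∈ m.primeFactors := by
        refine Nat.mem_primeFactors.mpr ⟨hbp, ?_, hm.ne'⟩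
        refine hbdvd.trans ?_
        rw [← h4]
        exact Finset.dvd_prod_of_mem v (Finset.mem_univ g)
      refine ⟨⟨b, hbm⟩, Finset.mem_filter.mpr ⟨Finset.mem_attach _ _, ?_⟩, rfl⟩
      show Classical.choose (hex ⟨b, hbm⟩) = g
      exact huniq v h2 b hbp _ g (Classical.choose_spec (hex ⟨b, hbm⟩)) hbdvd
  · -- card of Pn
    rw [Nat.card_pi, ← Finset.prod_coe_sort m.primeFactors (wn n)]
    exact Finset.prod_congr rfl fun p _ => card_cond _

end Stmt15Aux

/-- Let `T_n = {g ∈ G_n : g ≠ 1, π₀(q_n(g)) = 0}`.  For `m ≥ 1`, the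
number of tuples `(v_g)_{g ∈ T_n}` of positive squarefree pairwise coprime integers
with `p ∣ v_g ⟹ p ≡ 1 (mod ord g)` and `∏ v_g = m` equals `∏_{p ∣ m} w_n(p)` if `m` is
squarefree, and `0` otherwise. -/
theorem stmt_15 (n : ℕ) (hn : 1 ≤ n) (m : ℕ) (hm : 0 < m) :
    Nat.card {v : {g : Gn n // g ≠ 1 ∧ pi0 (Gn.qn g) = 0} → ℕ //
        (∀ g, 0 < v g ∧ Squarefree (v g)) ∧
        (∀ g h, g ≠ h → Nat.Coprime (v g) (v h)) ∧
        (∀ g p, p.Prime → p ∣ v g → p ≡ 1 [MOD orderOf (g : Gn n)]) ∧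
        ∏ g, v g = m}
      = if Squarefree m then ∏ p ∈ m.primeFactors, wn n p else 0 := by
  by_cases hsq : Squarefree m
  · rw [if_pos hsq]
    exact Stmt15Aux.card_S n hm hsq
  · rw [if_neg hsq]
    have : IsEmpty {v : {g : Gn n // g ≠ 1 ∧ pi0 (Gn.qn g) = 0} → ℕ //
        (∀ g, 0 < v g ∧ Squarefree (v g)) ∧
        (∀ g h, g ≠ h → Nat.Coprime (v g) (v h)) ∧
        (∀ g p, p.Prime → p ∣ v g → p ≡ 1 [MOD orderOf (g : Gn n)]) ∧
        ∏ g, v g = m} := by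
      constructor
      rintro ⟨v, h1, h2, h3, h4⟩
      exact hsq (h4 ▸ Stmt15Aux.squarefree_prod Finset.univ v (fun g _ => (h1 g).2)
        (fun g _ h _ => h2 g h))
    exact Nat.card_of_isEmpty
end
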